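/- arXiv:1909.12577 — 4 statements merged into one kernel-verified Lean document; each statement's English description precedes it below -/
import Mathlib

section
/- Let U ⊆ ℝⁿ be open, let g be a smooth Riemannian metric on U (a smooth map into positive definite symmetric real n×n matrices with inverse entries g^{ij}), let λ ∈ ℝ, and let θ_1,…,θ_n : U → M_r(ℂ) be a flat Higgs field (∂_iθ_j = ∂_jθ_i and θ_iθ_j = θ_jθ_i for all i,j). Suppose H : U × (0,T) → {positive definite Hermitian r×r complex matrices} is smooth and solves the affine Hermitian–Yang–Mills flow in local affine coordinates: ∂_tH = Σ_{i,j} g^{ij}(∂_i∂_jH − ∂_jH·H⁻¹·∂_iH) + 4λH − 4Σ_{i,j} g^{ij}(Hθ_iH⁻¹θ_j^†H − θ_j^†Hθ_i). Then the real-valued function u := tr(H⁻¹∂_tH) (equal to ∂_t log det H, and equal to −4·tr(tr_g(F_H+[θ,θ^{*H}]) − λ·Id)) solves the linear heat equation ∂_t u = Σ_{i,j} g^{ij} ∂_i∂_j u on U × (0,T). (Proposition 3.1, first identity, in local affine coordinates.) -/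
open Matrix
open scoped ComplexOrder

attribute [local instance] Matrix.normedAddCommGroup Matrix.normedSpace

/-- Partial derivative in the `i`-th coordinate direction of a function on `ℝⁿ`. -/
noncomputable def pd {n : ℕ} {E : Type} [NormedAddCommGroup E] [NormedSpace ℝ E]
    (i : Fin n) (f : (Fin n → ℝ) → E) (x : Fin n → ℝ) : E :=
  fderiv ℝ f x (Pi.single i 1)

variable {m : ℕ} {𝔸 : Type} [RCLike 𝔸]

/-- entry map is smooth -/
lemma contDiff_entry (a b : Fin m) :
    ContDiff ℝ (⊤ : ℕ∞) (fun A : Matrix (Fin m) (Fin m) 𝔸 => A a b) :=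
  contDiff_pi.mp (contDiff_pi.mp contDiff_id a) b

lemma ContDiff.finset_prod' {ι E : Type*} [NormedAddCommGroup E] [NormedSpace ℝ E]
    {f : ι → E → 𝔸} {s : Finset ι} {N : WithTop ℕ∞}
    (h : ∀ i ∈ s, ContDiff ℝ N (f i)) :
    ContDiff ℝ N (fun x => ∏ i ∈ s, f i x) := by
  classical
  induction s using Finset.induction with
  | empty => simpa using contDiff_const
  | @insert a s ha ih =>
    simp_rw [Finset.prod_insert ha]
    exact (h a (Finset.mem_insert_self a s)).mul
      (ih fun i hi => h i (Finset.mem_insert_of_mem hi))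

lemma contDiff_det' :
    ContDiff ℝ (⊤ : ℕ∞) (fun A : Matrix (Fin m) (Fin m) 𝔸 => A.det) := by
  have h : (fun A : Matrix (Fin m) (Fin m) 𝔸 => A.det)
      = fun A => ∑ σ : Equiv.Perm (Fin m),
          ((Equiv.Perm.sign σ : ℤ) : 𝔸) * ∏ i, A (σ i) i := by
    funext A
    rw [Matrix.det_apply]
    congr 1
    funext σ
    rw [Units.smul_def, zsmul_eq_mul]
  rw [h]
  exact ContDiff.sum fun σ _ =>
    contDiff_const.mul (ContDiff.finset_prod' fun i _ => contDiff_entry (σ i) i)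

lemma contDiff_adjugate' :
    ContDiff ℝ (⊤ : ℕ∞) (fun A : Matrix (Fin m) (Fin m) 𝔸 => A.adjugate) := by
  refine contDiff_pi.mpr fun i => ?_
  refine contDiff_pi.mpr fun j => ?_
  simp_rw [Matrix.adjugate_apply]
  apply contDiff_det'.comp
  refine contDiff_pi.mpr fun a => ?_
  refine contDiff_pi.mpr fun b => ?_
  rcases eq_or_ne a j with rfl | ha
  · simp_rw [Matrix.updateRow_self]
    exact contDiff_const
  · simp_rw [Matrix.updateRow_ne ha]
    exact contDiff_entry a b

/-- multiplication as a continuous bilinear map -/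
noncomputable def mulL (m : ℕ) (𝔸 : Type) [RCLike 𝔸] :
    Matrix (Fin m) (Fin m) 𝔸 →L[ℝ]
      Matrix (Fin m) (Fin m) 𝔸 →L[ℝ] Matrix (Fin m) (Fin m) 𝔸 :=
  LinearMap.toContinuousLinearMap
  { toFun := fun A => LinearMap.toContinuousLinearMap (LinearMap.mulLeft ℝ A)
    map_add' := fun A B => by ext C; simp [add_mul]
    map_smul' := fun c A => by ext C; simp [smul_mul_assoc] }

@[simp] lemma mulL_apply (A B : Matrix (Fin m) (Fin m) 𝔸) : mulL m 𝔸 A B = A * B := rfl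

/-- trace as a continuous linear map -/
noncomputable def traceL (m : ℕ) (𝔸 : Type) [RCLike 𝔸] :
    Matrix (Fin m) (Fin m) 𝔸 →L[ℝ] 𝔸 :=
  LinearMap.toContinuousLinearMap (Matrix.traceLinearMap (Fin m) ℝ 𝔸)

@[simp] lemma traceL_apply (A : Matrix (Fin m) (Fin m) 𝔸) : traceL m 𝔸 A = A.trace := rfl

section Calc
variable {E : Type*} [NormedAddCommGroup E] [NormedSpace ℝ E]
  {f g : E → Matrix (Fin m) (Fin m) 𝔸} {p : E}

lemma DifferentiableAt.matmul (hf : DifferentiableAt ℝ f p) (hg : DifferentiableAt ℝ g p) :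
    DifferentiableAt ℝ (fun q => f q * g q) p := by
  have : (fun q => f q * g q) = fun q => (mulL m 𝔸 (f q)) (g q) := rfl
  rw [this]
  exact (((mulL m 𝔸).differentiable.differentiableAt).comp p hf).clm_apply hg

lemma fderiv_matmul (hf : DifferentiableAt ℝ f p) (hg : DifferentiableAt ℝ g p) (v : E) :
    fderiv ℝ (fun q => f q * g q) p v
      = fderiv ℝ f p v * g p + f p * fderiv ℝ g p v := by
  have h := (ContinuousLinearMap.hasFDerivAt_of_bilinear (B := mulL m 𝔸) hf.hasFDerivAt hg.hasFDerivAt).fderiv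
  have h2 := congrArg (fun L => L v) h
  simp at h2
  rw [add_comm]
  exact h2

lemma ContDiffOn.matmul {s : Set E} {N : WithTop ℕ∞}
    (hf : ContDiffOn ℝ N f s) (hg : ContDiffOn ℝ N g s) :
    ContDiffOn ℝ N (fun q => f q * g q) s := by
  have : (fun q => f q * g q) = fun q => (mulL m 𝔸 (f q)) (g q) := rfl
  rw [this]
  exact ((mulL m 𝔸).contDiff.comp_contDiffOn hf).clm_apply hg

lemma fderiv_tracecomp (hf : DifferentiableAt ℝ f p) (v : E) :
    fderiv ℝ (fun q => (f q).trace) p v = (fderiv ℝ f p v).trace := by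
  have h0 : (fun q => (f q).trace) = ⇑(traceL m 𝔸) ∘ f := rfl
  rw [h0, (((traceL m 𝔸).hasFDerivAt).comp p hf.hasFDerivAt).fderiv]
  rfl

/-- smoothness of pointwise matrix inverse -/
lemma contDiffOn_matinv {s : Set E} (hs : IsOpen s)
    (hf : ContDiffOn ℝ (⊤ : ℕ∞) f s) (hdet : ∀ p ∈ s, (f p).det ≠ 0) :
    ContDiffOn ℝ (⊤ : ℕ∞) (fun q => (f q)⁻¹) s := by
  have h1 : ContDiffOn ℝ (⊤ : ℕ∞) (fun q => (f q).det) s := contDiff_det'.comp_contDiffOn hf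
  have h2 : ContDiffOn ℝ (⊤ : ℕ∞) (fun q => ((f q).det)⁻¹) s := h1.inv hdet
  have h3 : ContDiffOn ℝ (⊤ : ℕ∞) (fun q => (f q).adjugate) s := contDiff_adjugate'.comp_contDiffOn hf
  have h4 : ContDiffOn ℝ (⊤ : ℕ∞) (fun q => ((f q).det)⁻¹ • (f q).adjugate) s := by
    apply contDiffOn_pi.mpr; intro a
    apply contDiffOn_pi.mpr; intro b
    have : (fun q => (((f q).det)⁻¹ • (f q).adjugate) a b)
        = fun q => ((f q).det)⁻¹ * (f q).adjugate a b := by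
      funext q; simp [Matrix.smul_apply, smul_eq_mul]
    rw [this]
    exact h2.mul ((contDiff_entry a b).comp_contDiffOn h3)
  apply h4.congr
  intro q hq
  rw [Matrix.inv_def, Ring.inverse_eq_inv']

end Calc

section Swap
variable {E F' : Type*} [NormedAddCommGroup E] [NormedSpace ℝ E]
  [NormedAddCommGroup F'] [NormedSpace ℝ F'] {f : E → F'} {p : E}

lemma fderiv_fderiv_apply (hf : ContDiffAt ℝ (⊤ : ℕ∞) f p) (a b : E) :
    fderiv ℝ (fun q => fderiv ℝ f q a) p b = fderiv ℝ (fderiv ℝ f) p b a := by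
  have hd : DifferentiableAt ℝ (fderiv ℝ f) p := by
    have : ContDiffAt ℝ 1 (fderiv ℝ f) p := hf.fderiv_right (by norm_num; exact WithTop.coe_le_coe.mpr le_top)
    exact this.differentiableAt one_ne_zero
  rw [fderiv_clm_apply hd (differentiableAt_const a)]
  simp

lemma fderiv_swap (hf : ContDiffAt ℝ (⊤ : ℕ∞) f p) (a b : E) :
    fderiv ℝ (fun q => fderiv ℝ f q a) p b = fderiv ℝ (fun q => fderiv ℝ f q b) p a := by
  rw [fderiv_fderiv_apply hf a b, fderiv_fderiv_apply hf b a]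
  exact (hf.isSymmSndFDerivAt (by norm_num; exact WithTop.coe_le_coe.mpr le_top)) b a

end Swap

section Slice
variable {n : ℕ} {F' : Type} [NormedAddCommGroup F'] [NormedSpace ℝ F']
  {f : (Fin n → ℝ) × ℝ → F'}

lemma deriv_slice {x : Fin n → ℝ} {t : ℝ} (hf : DifferentiableAt ℝ f (x, t)) :
    deriv (fun s => f (x, s)) t = fderiv ℝ f (x, t) (0, 1) := by
  have h : HasDerivAt (fun s : ℝ => ((x, s) : (Fin n → ℝ) × ℝ)) (0, 1) t :=
    HasDerivAt.prodMk (hasDerivAt_const t x) (hasDerivAt_id t)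
  exact (hf.hasFDerivAt.comp_hasDerivAt t h).deriv

lemma pd_slice {x : Fin n → ℝ} {t : ℝ} (hf : DifferentiableAt ℝ f (x, t)) (i : Fin n) :
    pd i (fun y => f (y, t)) x = fderiv ℝ f (x, t) (Pi.single i 1, 0) := by
  have h : HasFDerivAt (fun y : Fin n → ℝ => ((y, t) : (Fin n → ℝ) × ℝ))
      ((ContinuousLinearMap.id ℝ (Fin n → ℝ)).prod 0) x :=
    HasFDerivAt.prodMk (hasFDerivAt_id x) (hasFDerivAt_const t x)
  have h2 := (hf.hasFDerivAt.comp x h).fderiv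
  rw [pd, show (fun y => f (y, t)) = (f ∘ fun y => (y, t)) from rfl, h2]
  rfl

end Slice

lemma contDiffOn_fderiv_top {E G : Type*} [NormedAddCommGroup E] [NormedSpace ℝ E]
    [NormedAddCommGroup G] [NormedSpace ℝ G] {Ω : Set E} {F : E → G}
    (hΩ : IsOpen Ω) (hF : ContDiffOn ℝ (⊤ : ℕ∞) F Ω) :
    ContDiffOn ℝ (⊤ : ℕ∞) (fderiv ℝ F) Ω :=
  hF.fderiv_of_isOpen hΩ (by simp)

section Inv
variable {r : ℕ} {E : Type*} [NormedAddCommGroup E] [NormedSpace ℝ E]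
  {Ω : Set E} {F : E → Matrix (Fin r) (Fin r) ℂ} {p : E}

lemma fderiv_matinv (hΩ : IsOpen Ω) (hF : ContDiffOn ℝ (⊤ : ℕ∞) F Ω)
    (hdet : ∀ q ∈ Ω, IsUnit (F q).det) (hp : p ∈ Ω) (v : E) :
    fderiv ℝ (fun q => (F q)⁻¹) p v
      = -((F p)⁻¹ * fderiv ℝ F p v * (F p)⁻¹) := by
  have hKc : ContDiffOn ℝ (⊤ : ℕ∞) (fun q => (F q)⁻¹) Ω :=
    contDiffOn_matinv hΩ hF (fun q hq => (hdet q hq).ne_zero)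
  have hKd : DifferentiableAt ℝ (fun q => (F q)⁻¹) p :=
    (hKc.contDiffAt (hΩ.mem_nhds hp)).differentiableAt (by simp)
  have hFd : DifferentiableAt ℝ F p :=
    ((hF.contDiffAt (hΩ.mem_nhds hp)).differentiableAt (by simp))
  have hev : (fun q => (F q)⁻¹ * F q) =ᶠ[nhds p]
      fun _ => (1 : Matrix (Fin r) (Fin r) ℂ) := by
    filter_upwards [hΩ.mem_nhds hp] with q hq
    exact Matrix.nonsing_inv_mul _ (hdet q hq)
  have h0 : fderiv ℝ (fun q => (F q)⁻¹ * F q) p = 0 := by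
    rw [hev.fderiv_eq]; exact fderiv_const_apply _
  have h1 : fderiv ℝ (fun q => (F q)⁻¹) p v * F p
      + (F p)⁻¹ * fderiv ℝ F p v = 0 := by
    rw [← fderiv_matmul hKd hFd v, h0]; rfl
  have h2 : fderiv ℝ (fun q => (F q)⁻¹) p v * F p
      = -((F p)⁻¹ * fderiv ℝ F p v) := by
    linear_combination (norm := noncomm_ring) h1
  calc fderiv ℝ (fun q => (F q)⁻¹) p v
      = fderiv ℝ (fun q => (F q)⁻¹) p v * (F p * (F p)⁻¹) := by
        rw [Matrix.mul_nonsing_inv _ (hdet p hp), mul_one]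
    _ = fderiv ℝ (fun q => (F q)⁻¹) p v * F p * (F p)⁻¹ := by rw [mul_assoc]
    _ = -((F p)⁻¹ * fderiv ℝ F p v) * (F p)⁻¹ := by rw [h2]
    _ = -((F p)⁻¹ * fderiv ℝ F p v * (F p)⁻¹) := by rw [neg_mul]

lemma contDiffOn_traceKdF (hΩ : IsOpen Ω) (hF : ContDiffOn ℝ (⊤ : ℕ∞) F Ω)
    (hdet : ∀ q ∈ Ω, IsUnit (F q).det) (a : E) :
    ContDiffOn ℝ (⊤ : ℕ∞) (fun q => ((F q)⁻¹ * fderiv ℝ F q a).trace) Ω := by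
  have h1 : ContDiffOn ℝ (⊤ : ℕ∞) (fun q => (F q)⁻¹ * fderiv ℝ F q a) Ω :=
    (contDiffOn_matinv hΩ hF (fun q hq => (hdet q hq).ne_zero)).matmul
      ((contDiffOn_fderiv_top hΩ hF).clm_apply contDiffOn_const)
  exact (traceL r ℂ).contDiff.comp_contDiffOn h1

lemma fderiv_traceKdF (hΩ : IsOpen Ω) (hF : ContDiffOn ℝ (⊤ : ℕ∞) F Ω)
    (hdet : ∀ q ∈ Ω, IsUnit (F q).det) (hp : p ∈ Ω) (a b : E) :
    fderiv ℝ (fun q => ((F q)⁻¹ * fderiv ℝ F q a).trace) p b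
      = ((F p)⁻¹ * fderiv ℝ (fun q => fderiv ℝ F q a) p b).trace
        - ((F p)⁻¹ * fderiv ℝ F p b * ((F p)⁻¹ * fderiv ℝ F p a)).trace := by
  have hKc : ContDiffOn ℝ (⊤ : ℕ∞) (fun q => (F q)⁻¹) Ω :=
    contDiffOn_matinv hΩ hF (fun q hq => (hdet q hq).ne_zero)
  have hKd : DifferentiableAt ℝ (fun q => (F q)⁻¹) p :=
    (hKc.contDiffAt (hΩ.mem_nhds hp)).differentiableAt (by simp)
  have hDfd : DifferentiableAt ℝ (fderiv ℝ F) p :=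
    (((contDiffOn_fderiv_top hΩ hF).contDiffAt (hΩ.mem_nhds hp)).differentiableAt (by simp))
  have hdFa : DifferentiableAt ℝ (fun q => fderiv ℝ F q a) p :=
    hDfd.clm_apply (differentiableAt_const a)
  rw [fderiv_tracecomp (hKd.matmul hdFa) b, fderiv_matmul hKd hdFa b,
    fderiv_matinv hΩ hF hdet hp b]
  rw [Matrix.trace_add]
  have : -((F p)⁻¹ * fderiv ℝ F p b * (F p)⁻¹) * fderiv ℝ F p a
      = -((F p)⁻¹ * fderiv ℝ F p b * ((F p)⁻¹ * fderiv ℝ F p a)) := by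
    noncomm_ring
  rw [this, Matrix.trace_neg]
  ring

lemma closed_oneform (hΩ : IsOpen Ω) (hF : ContDiffOn ℝ (⊤ : ℕ∞) F Ω)
    (hdet : ∀ q ∈ Ω, IsUnit (F q).det) (hp : p ∈ Ω) (a b : E) :
    fderiv ℝ (fun q => ((F q)⁻¹ * fderiv ℝ F q a).trace) p b
      = fderiv ℝ (fun q => ((F q)⁻¹ * fderiv ℝ F q b).trace) p a := by
  rw [fderiv_traceKdF hΩ hF hdet hp a b, fderiv_traceKdF hΩ hF hdet hp b a]
  have hFat : ContDiffAt ℝ (⊤ : ℕ∞) F p := hF.contDiffAt (hΩ.mem_nhds hp)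
  erw [fderiv_swap hFat a b]
  rw [Matrix.trace_mul_comm ((F p)⁻¹ * fderiv ℝ F p b)
    ((F p)⁻¹ * fderiv ℝ F p a)]
  rfl

end Inv

set_option maxHeartbeats 2000000 in
/-- **Proposition 3.1, first identity, in local affine coordinates.**
Along the affine Hermitian–Yang–Mills flow, the function
`u := tr(H⁻¹ ∂ₜH) = −4·tr(tr_g(F_H + [θ,θ^{*H}]) − λ·Id)` solves the linear heat
equation `∂ₜ u = Σ_{i,j} g^{ij} ∂_i∂_j u`. -/
theorem heat_equation_for_trace_of_mean_curvature
    {n r : ℕ} (hn : 1 ≤ n) (hr : 1 ≤ r)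
    (U : Set (Fin n → ℝ)) (hU : IsOpen U)
    -- the Riemannian metric `g` : smooth, positive definite symmetric
    (g : (Fin n → ℝ) → Matrix (Fin n) (Fin n) ℝ)
    (hg : ContDiffOn ℝ (⊤ : ℕ∞) g U)
    (hgpos : ∀ x ∈ U, (g x).PosDef)
    -- the Einstein factor
    (lam : ℝ)
    -- the flat Higgs field
    (θ : Fin n → (Fin n → ℝ) → Matrix (Fin r) (Fin r) ℂ)
    (hθ : ∀ i, ContDiffOn ℝ (⊤ : ℕ∞) (θ i) U)
    (hθflat : ∀ i j, ∀ x ∈ U, pd i (θ j) x = pd j (θ i) x)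
    (hθcomm : ∀ i j, ∀ x ∈ U, θ i x * θ j x = θ j x * θ i x)
    -- the solution `H` of the affine Hermitian–Yang–Mills flow on `U × (0,T)`
    (T : ℝ)
    (H : (Fin n → ℝ) → ℝ → Matrix (Fin r) (Fin r) ℂ)
    (hHsmooth : ContDiffOn ℝ (⊤ : ℕ∞) (fun p : (Fin n → ℝ) × ℝ => H p.1 p.2) (U ×ˢ Set.Ioo 0 T))
    (hHpos : ∀ x ∈ U, ∀ t ∈ Set.Ioo 0 T, (H x t).PosDef)
    (hflow : ∀ x ∈ U, ∀ t ∈ Set.Ioo 0 T,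
      deriv (fun s => H x s) t =
        (∑ i, ∑ j, (((g x)⁻¹ i j : ℝ) : ℂ) •
          (pd i (fun y => pd j (fun z => H z t) y) x
            - pd j (fun z => H z t) x * (H x t)⁻¹ * pd i (fun z => H z t) x))
        + ((4 * lam : ℝ) : ℂ) • H x t
        - (4 : ℂ) • ∑ i, ∑ j, (((g x)⁻¹ i j : ℝ) : ℂ) •
            (H x t * θ i x * (H x t)⁻¹ * (θ j x)ᴴ * H x t - (θ j x)ᴴ * H x t * θ i x)) :
    -- conclusion : `u := tr(H⁻¹ ∂ₜH)` solves the heat equation `∂ₜu = Σ g^{ij} ∂_i∂_j u`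
    ∀ x ∈ U, ∀ t ∈ Set.Ioo 0 T,
      deriv (fun s => Matrix.trace ((H x s)⁻¹ * deriv (fun s' => H x s') s)) t =
        ∑ i, ∑ j, (((g x)⁻¹ i j : ℝ) : ℂ) *
          pd i (fun y =>
            pd j (fun z => Matrix.trace ((H z t)⁻¹ * deriv (fun s' => H z s') t)) y) x := by
  intro x hx t ht
  classical
  -- notation
  set E := (Fin n → ℝ) × ℝ
  set Ω : Set E := U ×ˢ Set.Ioo 0 T with hΩdef
  have hΩ : IsOpen Ω := hU.prod isOpen_Ioo
  set F : E → Matrix (Fin r) (Fin r) ℂ := fun p => H p.1 p.2 with hFdef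
  have hF : ContDiffOn ℝ (⊤ : ℕ∞) F Ω := hHsmooth
  have hdet : ∀ q ∈ Ω, IsUnit (F q).det := by
    rintro ⟨y, s⟩ ⟨hy, hs⟩
    exact (hHpos y hy s hs).det_pos.ne'.isUnit
  have hp : ((x, t) : E) ∈ Ω := ⟨hx, ht⟩
  set p : E := (x, t) with hpdef
  -- directions
  set τ : E := ((0 : Fin n → ℝ), (1 : ℝ)) with hτdef
  set ε : Fin n → E := fun i => ((Pi.single i 1 : Fin n → ℝ), (0 : ℝ)) with hεdef
  -- basic differentiability
  have hFd : ∀ q ∈ Ω, DifferentiableAt ℝ F q := fun q hq =>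
    (hF.contDiffAt (hΩ.mem_nhds hq)).differentiableAt (by simp)
  have hDf := contDiffOn_fderiv_top hΩ hF
  have hdFd : ∀ (a : E), ∀ q ∈ Ω, DifferentiableAt ℝ (fun q' => fderiv ℝ F q' a) q :=
    fun a q hq => ((hDf.contDiffAt (hΩ.mem_nhds hq)).differentiableAt (by simp)).clm_apply
      (differentiableAt_const a)
  -- the scalar fields
  set A : E → E → ℂ := fun a q => ((F q)⁻¹ * fderiv ℝ F q a).trace with hAdef
  have hA : ∀ a, ContDiffOn ℝ (⊤ : ℕ∞) (A a) Ω := fun a => contDiffOn_traceKdF hΩ hF hdet a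
  set u : E → ℂ := A τ with hudef
  have hu : ContDiffOn ℝ (⊤ : ℕ∞) u Ω := hA τ
  have hud : ∀ q ∈ Ω, DifferentiableAt ℝ u q := fun q hq =>
    (hu.contDiffAt (hΩ.mem_nhds hq)).differentiableAt (by simp)
  set w : Fin n → E → ℂ := fun j q => fderiv ℝ u q (ε j) with hwdef
  have hwd : ∀ j, ∀ q ∈ Ω, DifferentiableAt ℝ (w j) q := by
    intro j q hq
    have h := (((contDiffOn_fderiv_top hΩ hu).contDiffAt
      (hΩ.mem_nhds hq)).differentiableAt (by simp)).clm_apply (differentiableAt_const (ε j))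
    exact h
  set B : Fin n → Fin n → E → ℂ := fun i j q => fderiv ℝ (A (ε j)) q (ε i) with hBdef
  have hBd : ∀ i j, ∀ q ∈ Ω, DifferentiableAt ℝ (B i j) q := by
    intro i j q hq
    have h := (((contDiffOn_fderiv_top hΩ (hA (ε j))).contDiffAt
      (hΩ.mem_nhds hq)).differentiableAt (by simp)).clm_apply (differentiableAt_const (ε i))
    exact h
  -- slice identities for H
  have hderiv_slice : ∀ (y : Fin n → ℝ) (s : ℝ), (y, s) ∈ Ω →
      deriv (fun s' => H y s') s = fderiv ℝ F (y, s) τ := by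
    intro y s hq
    exact deriv_slice (f := F) (hFd (y, s) hq)
  have hpd_slice : ∀ (j : Fin n) (y : Fin n → ℝ) (s : ℝ), (y, s) ∈ Ω →
      pd j (fun z => H z s) y = fderiv ℝ F (y, s) (ε j) := by
    intro j y s hq
    exact pd_slice (f := F) (hFd (y, s) hq) j
  -- the double pd terms in the flow
  have hpdpd : ∀ (i j : Fin n) (y : Fin n → ℝ) (s : ℝ), (y, s) ∈ U ×ˢ Set.Ioo 0 T →
      pd i (fun y' => pd j (fun z => H z s) y') y
        = fderiv ℝ (fun q => fderiv ℝ F q (ε j)) (y, s) (ε i) := by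
    intro i j y s hq
    have hsIoo : s ∈ Set.Ioo 0 T := hq.2
    have hev : (fun y' => pd j (fun z => H z s) y')
        =ᶠ[nhds y] (fun y' => (fun q => fderiv ℝ F q (ε j)) (y', s)) := by
      filter_upwards [hU.mem_nhds hq.1] with y' hy'
      exact hpd_slice j y' s ⟨hy', hsIoo⟩
    erw [pd, hev.fderiv_eq, ← pd]
    exact pd_slice (f := fun q => fderiv ℝ F q (ε j)) (hdFd (ε j) (y, s) hq) i
  -- the trace of the flow equation : u = Σ ĝ B + 4λr  (at (x, s) for s ∈ Ioo 0 T)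
  have claimA : ∀ s ∈ Set.Ioo 0 T,
      u (x, s) = (∑ i, ∑ j, (((g x)⁻¹ i j : ℝ) : ℂ) * B i j (x, s))
        + ((4 * lam : ℝ) : ℂ) * (r : ℂ) := by
    intro s hs
    have hq : ((x, s) : E) ∈ Ω := ⟨hx, hs⟩
    have hKF : (F (x, s))⁻¹ * F (x, s) = 1 := Matrix.nonsing_inv_mul _ (hdet _ hq)
    have h0 : u (x, s) = ((F (x, s))⁻¹ * deriv (fun s' => H x s') s).trace := by
      rw [hderiv_slice x s hq]
    rw [h0, hflow x hx s hs]
    -- expand the trace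
    rw [mul_sub, mul_add, Matrix.trace_sub, Matrix.trace_add]
    -- second term
    have h2 : ((F (x, s))⁻¹ * (((4 * lam : ℝ) : ℂ) • H x s)).trace
        = ((4 * lam : ℝ) : ℂ) * (r : ℂ) := by
      rw [mul_smul_comm, Matrix.trace_smul, smul_eq_mul]
      have : (F (x, s))⁻¹ * H x s = 1 := hKF
      rw [this, Matrix.trace_one]
      simp
    -- third term vanishes
    have h3 : ((F (x, s))⁻¹ * ((4 : ℂ) • ∑ i, ∑ j, (((g x)⁻¹ i j : ℝ) : ℂ) •
        (H x s * θ i x * (H x s)⁻¹ * (θ j x)ᴴ * H x s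
          - (θ j x)ᴴ * H x s * θ i x))).trace = 0 := by
      rw [mul_smul_comm, Matrix.trace_smul, smul_eq_mul]
      rw [Finset.mul_sum, Matrix.trace_sum]
      have hz : ∀ i j : Fin n,
          ((F (x, s))⁻¹ * ((((g x)⁻¹ i j : ℝ) : ℂ) •
            (H x s * θ i x * (H x s)⁻¹ * (θ j x)ᴴ * H x s
              - (θ j x)ᴴ * H x s * θ i x))).trace = 0 := by
        intro i j
        rw [mul_smul_comm, Matrix.trace_smul, smul_eq_mul, mul_sub, Matrix.trace_sub]
        have e1 : (F (x, s))⁻¹ * (H x s * θ i x * (H x s)⁻¹ * (θ j x)ᴴ * H x s)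
            = θ i x * (H x s)⁻¹ * (θ j x)ᴴ * H x s := by
          have : (F (x, s))⁻¹ * H x s = 1 := hKF
          calc (F (x, s))⁻¹ * (H x s * θ i x * (H x s)⁻¹ * (θ j x)ᴴ * H x s)
              = ((F (x, s))⁻¹ * H x s) * (θ i x * (H x s)⁻¹ * (θ j x)ᴴ * H x s) := by
                noncomm_ring
            _ = θ i x * (H x s)⁻¹ * (θ j x)ᴴ * H x s := by rw [this, one_mul]
        rw [e1]
        have e2 : ((F (x, s))⁻¹ * ((θ j x)ᴴ * H x s * θ i x)).trace
            = (θ i x * (H x s)⁻¹ * (θ j x)ᴴ * H x s).trace := by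
          have : (F (x, s))⁻¹ * ((θ j x)ᴴ * H x s * θ i x)
              = ((H x s)⁻¹ * (θ j x)ᴴ * H x s) * θ i x := by
            show (H x s)⁻¹ * ((θ j x)ᴴ * H x s * θ i x) = _
            noncomm_ring
          rw [this, Matrix.trace_mul_comm]
          congr 1
          noncomm_ring
        rw [e2, sub_self, mul_zero]
      have hzi : ∀ i : Fin n, ((F (x, s))⁻¹ * ∑ j, (((g x)⁻¹ i j : ℝ) : ℂ) •
          (H x s * θ i x * (H x s)⁻¹ * (θ j x)ᴴ * H x s
            - (θ j x)ᴴ * H x s * θ i x)).trace = 0 := by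
        intro i
        rw [Finset.mul_sum, Matrix.trace_sum]
        exact Finset.sum_eq_zero fun j _ => hz i j
      rw [Finset.sum_eq_zero fun i _ => hzi i, mul_zero]
    rw [h2, h3, sub_zero]
    congr 1
    -- first term
    simp_rw [Finset.mul_sum, Matrix.trace_sum]
    refine Finset.sum_congr rfl fun i _ => ?_
    refine Finset.sum_congr rfl fun j _ => ?_
    rw [mul_smul_comm, Matrix.trace_smul, smul_eq_mul]
    congr 1
    -- trace (K * (P - Q)) = B i j (x, s)
    rw [mul_sub, Matrix.trace_sub]
    rw [hpdpd i j x s hq, hpd_slice j x s hq, hpd_slice i x s hq]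
    rw [show B i j (x, s)
        = fderiv ℝ (fun q => ((F q)⁻¹ * fderiv ℝ F q (ε j)).trace) (x, s) (ε i) from rfl,
      fderiv_traceKdF hΩ hF hdet hq (ε j) (ε i)]
    congr 1
    -- the quadratic terms agree up to trace cyclicity
    have : (F (x, s))⁻¹ * (fderiv ℝ F (x, s) (ε j) * (H x s)⁻¹ * fderiv ℝ F (x, s) (ε i))
        = ((F (x, s))⁻¹ * fderiv ℝ F (x, s) (ε j)) * ((F (x, s))⁻¹ * fderiv ℝ F (x, s) (ε i)) := by
      show _ = ((H x s)⁻¹ * _) * ((H x s)⁻¹ * _)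
      noncomm_ring
    rw [this, Matrix.trace_mul_comm]
  -- LHS = fderiv u p τ
  have hLHS : deriv (fun s => Matrix.trace ((H x s)⁻¹ * deriv (fun s' => H x s') s)) t
      = fderiv ℝ u p τ := by
    have hev : (fun s => Matrix.trace ((H x s)⁻¹ * deriv (fun s' => H x s') s))
        =ᶠ[nhds t] (fun s => u (x, s)) := by
      filter_upwards [isOpen_Ioo.mem_nhds ht] with s hs
      have hq : ((x, s) : E) ∈ Ω := ⟨hx, hs⟩
      rw [hderiv_slice x s hq]
    rw [hev.deriv_eq]
    exact deriv_slice (f := u) (hud p hp)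
  -- RHS inner identification
  have hRHSij : ∀ i j : Fin n,
      pd i (fun y =>
        pd j (fun z => Matrix.trace ((H z t)⁻¹ * deriv (fun s' => H z s') t)) y) x
        = fderiv ℝ (w j) p (ε i) := by
    intro i j
    have hinner : ∀ y ∈ U,
        pd j (fun z => Matrix.trace ((H z t)⁻¹ * deriv (fun s' => H z s') t)) y
          = w j (y, t) := by
      intro y hy
      have hq : ((y, t) : E) ∈ Ω := ⟨hy, ht⟩
      have hev : (fun z => Matrix.trace ((H z t)⁻¹ * deriv (fun s' => H z s') t))
          =ᶠ[nhds y] (fun z => u (z, t)) := by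
        filter_upwards [hU.mem_nhds hy] with z hz
        rw [hderiv_slice z t ⟨hz, ht⟩]
      rw [pd, hev.fderiv_eq, ← pd]
      exact pd_slice (f := u) (hud (y, t) hq) j
    have hev2 : (fun y =>
        pd j (fun z => Matrix.trace ((H z t)⁻¹ * deriv (fun s' => H z s') t)) y)
        =ᶠ[nhds x] (fun y => w j (y, t)) := by
      filter_upwards [hU.mem_nhds hx] with y hy
      exact hinner y hy
    rw [pd, hev2.fderiv_eq, ← pd]
    exact pd_slice (f := w j) (hwd j p hp) i
  -- time derivative of claim A
  have hBderiv : ∀ i j : Fin n, HasDerivAt (fun s => B i j (x, s))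
      (fderiv ℝ (B i j) p τ) t := by
    intro i j
    have hd : DifferentiableAt ℝ (B i j) p := hBd i j p hp
    exact hd.hasFDerivAt.comp_hasDerivAt t (HasDerivAt.prodMk (hasDerivAt_const t x) (hasDerivAt_id t))
  have hmain : fderiv ℝ u p τ
      = ∑ i, ∑ j, (((g x)⁻¹ i j : ℝ) : ℂ) * fderiv ℝ (B i j) p τ := by
    have hsum : HasDerivAt (fun s => (∑ i, ∑ j, (((g x)⁻¹ i j : ℝ) : ℂ) * B i j (x, s))
        + ((4 * lam : ℝ) : ℂ) * (r : ℂ))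
        (∑ i, ∑ j, (((g x)⁻¹ i j : ℝ) : ℂ) * fderiv ℝ (B i j) p τ) t := by
      apply HasDerivAt.add_const
      apply HasDerivAt.fun_sum
      intro i _
      apply HasDerivAt.fun_sum
      intro j _
      exact (hBderiv i j).const_mul _
    have hev : (fun s => u (x, s)) =ᶠ[nhds t]
        (fun s => (∑ i, ∑ j, (((g x)⁻¹ i j : ℝ) : ℂ) * B i j (x, s))
          + ((4 * lam : ℝ) : ℂ) * (r : ℂ)) := by
      filter_upwards [isOpen_Ioo.mem_nhds ht] with s hs
      exact claimA s hs
    have h1 : deriv (fun s => u (x, s)) t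
        = ∑ i, ∑ j, (((g x)⁻¹ i j : ℝ) : ℂ) * fderiv ℝ (B i j) p τ := by
      rw [hev.deriv_eq]; exact hsum.deriv
    rw [← h1]
    exact (deriv_slice (f := u) (hud p hp)).symm
  -- swap derivatives : fderiv (B i j) p τ = fderiv (w j) p (ε i)
  have hswap : ∀ i j : Fin n, fderiv ℝ (B i j) p τ = fderiv ℝ (w j) p (ε i) := by
    intro i j
    have hAat : ContDiffAt ℝ (⊤ : ℕ∞) (A (ε j)) p := (hA (ε j)).contDiffAt (hΩ.mem_nhds hp)
    have h1 : fderiv ℝ (B i j) p τ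
        = fderiv ℝ (fun q => fderiv ℝ (A (ε j)) q τ) p (ε i) := by
      rw [hBdef]
      exact fderiv_swap hAat (ε i) τ
    rw [h1]
    have hev : (fun q => fderiv ℝ (A (ε j)) q τ) =ᶠ[nhds p] w j := by
      filter_upwards [hΩ.mem_nhds hp] with q hq
      rw [hwdef]
      exact closed_oneform hΩ hF hdet hq (ε j) τ
    exact congrFun (congrArg _ hev.fderiv_eq) (ε i)
  rw [hLHS, hmain]
  refine Finset.sum_congr rfl fun i _ => Finset.sum_congr rfl fun j _ => ?_
  rw [hswap i j, hRHSij i j]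
end

section
/- Let U ⊆ ℝⁿ be open with a smooth Riemannian metric g (inverse entries g^{ij}), λ ∈ ℝ, and a flat Higgs field θ_1,…,θ_n : U → M_r(ℂ) (∂_iθ_j = ∂_jθ_i, θ_iθ_j = θ_jθ_i). Suppose H, K : U × (0,T) → {positive definite Hermitian r×r complex matrices} are smooth and both solve the affine Hermitian–Yang–Mills flow ∂_tH = Σ_{i,j} g^{ij}(∂_i∂_jH − ∂_jH·H⁻¹·∂_iH) + 4λH − 4Σ_{i,j} g^{ij}(Hθ_iH⁻¹θ_j^†H − θ_j^†Hθ_i) (and the same with K). Then σ(H(t),K(t)) := tr(H⁻¹K) + tr(K⁻¹H) − 2r satisfies (Σ_{i,j} g^{ij}∂_i∂_j − ∂_t) σ(H(t),K(t)) ≥ 0 on U × (0,T). (Proposition 3.5 in local affine coordinates.) -/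
open Matrix
open scoped ComplexOrder

attribute [local instance] Matrix.normedAddCommGroup Matrix.normedSpace

namespace AHYM

variable {r : ℕ} {n : ℕ}

local notation "𝕄" => Matrix (Fin r) (Fin r) ℂ
local notation "X" => (Fin n → ℝ)


noncomputable def entryCLM (i j : Fin r) : 𝕄 →L[ℝ] ℂ :=
  LinearMap.toContinuousLinearMap
    { toFun := fun A => A i j, map_add' := fun _ _ => rfl, map_smul' := fun _ _ => rfl }

@[simp] lemma entryCLM_apply (i j : Fin r) (A : 𝕄) : entryCLM i j A = A i j := rfl

noncomputable def traceCLM : 𝕄 →L[ℝ] ℂ :=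
  LinearMap.toContinuousLinearMap
    ((Matrix.traceLinearMap (Fin r) ℂ ℂ).restrictScalars ℝ)

@[simp] lemma traceCLM_apply (A : 𝕄) : traceCLM A = Matrix.trace A := rfl

noncomputable def ctCLM : 𝕄 →L[ℝ] 𝕄 :=
  LinearMap.toContinuousLinearMap
    { toFun := fun A => Aᴴ,
      map_add' := fun A B => Matrix.conjTranspose_add A B,
      map_smul' := fun c A => by
        ext i j
        simp [Matrix.conjTranspose_apply, star_smul] }

@[simp] lemma ctCLM_apply (A : 𝕄) : ctCLM A = Aᴴ := rfl

noncomputable def mulCLM : 𝕄 →L[ℝ] 𝕄 →L[ℝ] 𝕄 :=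
  LinearMap.toContinuousLinearMap
    { toFun := fun A => LinearMap.toContinuousLinearMap
        ({ toFun := fun B => A * B,
           map_add' := fun B C => Matrix.mul_add A B C,
           map_smul' := fun c B => by
             ext i j
             simp [Matrix.mul_apply, Finset.smul_sum, Finset.mul_sum, mul_left_comm] } :
           𝕄 →ₗ[ℝ] 𝕄),
      map_add' := fun A B => by ext C i j; simp [Matrix.add_mul],
      map_smul' := fun c A => by
        ext C i j
        simp [Matrix.mul_apply, Finset.smul_sum, Finset.mul_sum, mul_comm, mul_left_comm] }

@[simp] lemma mulCLM_apply (A B : 𝕄) : mulCLM A B = A * B := rfl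

lemma isBoundedBilinearMap_matmul :
    IsBoundedBilinearMap ℝ (fun p : 𝕄 × 𝕄 => p.1 * p.2) :=
  mulCLM.isBoundedBilinearMap

/-! ### Differentiability combinators -/

lemma dmatmul {f g : X → 𝕄} {x : X}
    (hf : DifferentiableAt ℝ f x) (hg : DifferentiableAt ℝ g x) :
    DifferentiableAt ℝ (fun y => f y * g y) x :=
  (isBoundedBilinearMap_matmul.differentiableAt (f x, g x)).comp (g := fun p : 𝕄 × 𝕄 => p.1 * p.2) x (hf.prodMk hg)

lemma pd_congr_nhds {E : Type} [NormedAddCommGroup E] [NormedSpace ℝ E]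
    {f g : X → E} {x : X} (h : f =ᶠ[nhds x] g) (i : Fin n) :
    pd i f x = pd i g x := by
  unfold pd; rw [h.fderiv_eq]

lemma pd_clm {E F : Type} [NormedAddCommGroup E] [NormedSpace ℝ E]
    [NormedAddCommGroup F] [NormedSpace ℝ F]
    (L : E →L[ℝ] F) {f : X → E} {x : X} (hf : DifferentiableAt ℝ f x) (i : Fin n) :
    pd i (fun y => L (f y)) x = L (pd i f x) := by
  unfold pd
  have h : HasFDerivAt (fun y => L (f y)) (L.comp (fderiv ℝ f x)) x :=
    L.hasFDerivAt.comp x hf.hasFDerivAt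
  rw [h.fderiv]
  rfl

lemma pd_mul {f g : X → 𝕄} {x : X}
    (hf : DifferentiableAt ℝ f x) (hg : DifferentiableAt ℝ g x) (i : Fin n) :
    pd i (fun y => f y * g y) x = pd i f x * g x + f x * pd i g x := by
  unfold pd
  have h : HasFDerivAt (fun y => f y * g y)
      ((isBoundedBilinearMap_matmul.deriv (f x, g x)).comp
        ((fderiv ℝ f x).prod (fderiv ℝ g x))) x :=
    (isBoundedBilinearMap_matmul.hasFDerivAt (f x, g x)).comp (g := fun p : 𝕄 × 𝕄 => p.1 * p.2) x
      (hf.hasFDerivAt.prodMk hg.hasFDerivAt)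
  rw [h.fderiv]
  exact (IsBoundedBilinearMap.deriv_apply _ _ _).trans (add_comm _ _)

lemma pd_add {E : Type} [NormedAddCommGroup E] [NormedSpace ℝ E] {f g : X → E} {x : X}
    (hf : DifferentiableAt ℝ f x) (hg : DifferentiableAt ℝ g x) (i : Fin n) :
    pd i (fun y => f y + g y) x = pd i f x + pd i g x := by
  unfold pd; rw [fderiv_fun_add hf hg]; rfl

lemma pd_sub {E : Type} [NormedAddCommGroup E] [NormedSpace ℝ E] {f g : X → E} {x : X}
    (hf : DifferentiableAt ℝ f x) (hg : DifferentiableAt ℝ g x) (i : Fin n) :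
    pd i (fun y => f y - g y) x = pd i f x - pd i g x := by
  unfold pd; rw [fderiv_fun_sub hf hg]; rfl

lemma pd_const {E : Type} [NormedAddCommGroup E] [NormedSpace ℝ E] (c : E) (x : X) (i : Fin n) :
    pd i (fun _ => c) x = 0 := by
  unfold pd; rw [fderiv_fun_const]; rfl

/-! ### Smoothness of matrix operations -/

lemma contDiff_entry (i j : Fin r) : ContDiff ℝ (⊤ : ℕ∞) (fun A : 𝕄 => A i j) :=
  (entryCLM i j).contDiff

lemma contDiff_finset_prod {ι : Type*} {E : Type} [NormedAddCommGroup E] [NormedSpace ℝ E]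
    {f : ι → E → ℂ} {s : Finset ι} (h : ∀ i ∈ s, ContDiff ℝ (⊤ : ℕ∞) (f i)) :
    ContDiff ℝ (⊤ : ℕ∞) (fun x => ∏ i ∈ s, f i x) := by
  classical
  induction s using Finset.induction_on with
  | empty => simpa using contDiff_const
  | insert _ _ hnotmem ih =>
    rename_i a s
    simp only [Finset.prod_insert hnotmem]
    exact (h a (Finset.mem_insert_self a s)).mul
      (ih fun i hi => h i (Finset.mem_insert_of_mem hi))

lemma contDiff_det : ContDiff ℝ (⊤ : ℕ∞) (fun A : 𝕄 => A.det) := by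
  classical
  have : (fun A : 𝕄 => A.det)
      = fun A : 𝕄 => ∑ σ : Equiv.Perm (Fin r),
          (Equiv.Perm.sign σ : ℂ) * ∏ i, A (σ i) i := by
    funext A; rw [Matrix.det_apply']
  rw [this]
  apply ContDiff.sum
  intro σ _
  exact contDiff_const.mul (contDiff_finset_prod fun i _ => contDiff_entry (σ i) i)

lemma contDiff_matrix_pi {E : Type} [NormedAddCommGroup E] [NormedSpace ℝ E]
    {f : E → 𝕄} (h : ∀ i j, ContDiff ℝ (⊤ : ℕ∞) (fun x => f x i j)) :
    ContDiff ℝ (⊤ : ℕ∞) f := by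
  have : ContDiff ℝ (⊤ : ℕ∞) (fun x => (f x : Fin r → Fin r → ℂ)) :=
    contDiff_pi.2 fun i => contDiff_pi.2 fun j => h i j
  exact this

lemma contDiff_updateRow (j : Fin r) (c : Fin r → ℂ) :
    ContDiff ℝ (⊤ : ℕ∞) (fun A : 𝕄 => A.updateRow j c) := by
  classical
  apply contDiff_matrix_pi
  intro k l
  by_cases hk : k = j
  · subst hk
    have : (fun A : 𝕄 => A.updateRow k c k l) = fun _ => c l := by
      funext A; simp [Matrix.updateRow_apply]
    rw [this]; exact contDiff_const
  · have : (fun A : 𝕄 => A.updateRow j c k l) = fun A : 𝕄 => A k l := by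
      funext A; simp [Matrix.updateRow_apply, hk]
    rw [this]; exact contDiff_entry k l

lemma contDiff_adjugate : ContDiff ℝ (⊤ : ℕ∞) (fun A : 𝕄 => A.adjugate) := by
  classical
  apply contDiff_matrix_pi
  intro i j
  have : (fun A : 𝕄 => A.adjugate i j)
      = fun A : 𝕄 => (A.updateRow j (Pi.single i 1)).det := by
    funext A; rw [Matrix.adjugate_apply]
  rw [this]
  exact contDiff_det.comp (contDiff_updateRow j (Pi.single i 1))

lemma contDiffAt_matrix_inv {A₀ : 𝕄} (h : A₀.det ≠ 0) :
    ContDiffAt ℝ (⊤ : ℕ∞) (fun A : 𝕄 => A⁻¹) A₀ := by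
  classical
  have heq : (fun A : 𝕄 => A⁻¹) = fun A : 𝕄 => (A.det)⁻¹ • A.adjugate := by
    funext A
    rw [Matrix.inv_def, Ring.inverse_eq_inv']
  rw [heq]
  have h1 : ContDiffAt ℝ (⊤ : ℕ∞) (fun A : 𝕄 => (A.det)⁻¹) A₀ :=
    contDiff_det.contDiffAt.inv h
  have hsmul : IsBoundedBilinearMap ℝ (fun p : ℂ × 𝕄 => p.1 • p.2) :=
    isBoundedBilinearMap_smul
  exact (hsmul.contDiff.comp_contDiffAt A₀ (h1.prodMk contDiff_adjugate.contDiffAt))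



/-! ### extra pd lemmas -/

lemma pd_neg {f : X → 𝕄} {x : X} (hf : DifferentiableAt ℝ f x) (i : Fin n) :
    pd i (fun y => -(f y)) x = -(pd i f x) := by
  unfold pd; rw [fderiv_fun_neg]; rfl

lemma pd_matinv {f : X → 𝕄} {x : X}
    (hf : DifferentiableAt ℝ f x)
    (hinv : DifferentiableAt ℝ (fun y => (f y)⁻¹) x)
    (heq : ∀ᶠ y in nhds x, (f y)⁻¹ * f y = 1)
    (hx : f x * (f x)⁻¹ = 1) (i : Fin n) :
    pd i (fun y => (f y)⁻¹) x = -((f x)⁻¹ * pd i f x * (f x)⁻¹) := by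
  have h0 : pd i (fun y => (f y)⁻¹ * f y) x = 0 := by
    rw [pd_congr_nhds (g := fun _ => (1 : 𝕄)) heq i, pd_const]
  rw [pd_mul hinv hf] at h0
  have h1 : pd i (fun y => (f y)⁻¹) x * f x = -((f x)⁻¹ * pd i f x) := by
    linear_combination (norm := (noncomm_ring; skip)) h0
  calc pd i (fun y => (f y)⁻¹) x
      = pd i (fun y => (f y)⁻¹) x * (f x * (f x)⁻¹) := by rw [hx, mul_one]
    _ = (pd i (fun y => (f y)⁻¹) x * f x) * (f x)⁻¹ := by rw [mul_assoc]
    _ = -((f x)⁻¹ * pd i f x * (f x)⁻¹) := by rw [h1]; noncomm_ring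


lemma HasDerivAt.matmul {f g : ℝ → 𝕄} {t : ℝ} {f' g' : 𝕄}
    (hf : HasDerivAt f f' t) (hg : HasDerivAt g g' t) :
    HasDerivAt (fun s => f s * g s) (f' * g t + f t * g') t := by
  have h : HasDerivAt (fun s => f s * g s)
      ((isBoundedBilinearMap_matmul.deriv (f t, g t)) (f', g')) t :=
    (isBoundedBilinearMap_matmul.hasFDerivAt (f t, g t)).comp_hasDerivAt (l := fun p : 𝕄 × 𝕄 => p.1 * p.2) t (hf.prodMk hg)
  simpa [IsBoundedBilinearMap.deriv_apply, add_comm] using h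

lemma deriv_matmul {f g : ℝ → 𝕄} {t : ℝ}
    (hf : DifferentiableAt ℝ f t) (hg : DifferentiableAt ℝ g t) :
    deriv (fun s => f s * g s) t = deriv f t * g t + f t * deriv g t :=
  (HasDerivAt.matmul hf.hasDerivAt hg.hasDerivAt).deriv

lemma deriv_clm {E F : Type} [NormedAddCommGroup E] [NormedSpace ℝ E]
    [NormedAddCommGroup F] [NormedSpace ℝ F]
    (L : E →L[ℝ] F) {f : ℝ → E} {t : ℝ} (hf : DifferentiableAt ℝ f t) :
    deriv (fun s => L (f s)) t = L (deriv f t) :=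
  (L.hasFDerivAt.comp_hasDerivAt t hf.hasDerivAt).deriv

/-! ### derivative of pointwise inverse -/

lemma deriv_matinv {f : ℝ → 𝕄} {t : ℝ}
    (hf : DifferentiableAt ℝ f t)
    (hinv : DifferentiableAt ℝ (fun s => (f s)⁻¹) t)
    (heq : ∀ᶠ s in nhds t, (f s)⁻¹ * f s = 1)
    (hx : f t * (f t)⁻¹ = 1) :
    deriv (fun s => (f s)⁻¹) t = -((f t)⁻¹ * deriv f t * (f t)⁻¹) := by
  have h0 : deriv (fun s => (f s)⁻¹ * f s) t = 0 := by
    have : (fun s => (f s)⁻¹ * f s) =ᶠ[nhds t] fun _ => (1 : 𝕄) := heq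
    exact this.deriv_eq.trans (deriv_const t 1)
  rw [deriv_matmul hinv hf] at h0
  have h1 : deriv (fun s => (f s)⁻¹) t * f t = -((f t)⁻¹ * deriv f t) := by
    linear_combination (norm := (noncomm_ring; skip)) h0
  calc deriv (fun s => (f s)⁻¹) t
      = deriv (fun s => (f s)⁻¹) t * (f t * (f t)⁻¹) := by rw [hx, mul_one]
    _ = (deriv (fun s => (f s)⁻¹) t * f t) * (f t)⁻¹ := by rw [mul_assoc]
    _ = -((f t)⁻¹ * deriv f t * (f t)⁻¹) := by rw [h1]; noncomm_ring

/-! ### positivity -/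

lemma trace_mul_conjTranspose_self_re_nonneg (N : 𝕄) :
    0 ≤ (Matrix.trace (N * Nᴴ)).re := by
  classical
  have h : Matrix.trace (N * Nᴴ) = ∑ i, ∑ j, N i j * star (N i j) := by
    simp [Matrix.trace, Matrix.diag, Matrix.mul_apply, Matrix.conjTranspose_apply]
  rw [h]
  rw [Complex.re_sum]
  apply Finset.sum_nonneg
  intro i _
  rw [Complex.re_sum]
  apply Finset.sum_nonneg
  intro j _
  have : N i j * star (N i j) = ((Complex.normSq (N i j) : ℝ) : ℂ) := by
    have := Complex.mul_conj (N i j)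
    simpa using this
  rw [this]
  simp [Complex.normSq_nonneg]

lemma trace_posdef_pair_nonneg {P Q : 𝕄} (hP : P.PosDef) (hQ : Q.PosDef) (V : 𝕄) :
    0 ≤ (Matrix.trace (P * V * Q * Vᴴ)).re := by
  classical
  obtain ⟨p, hpH, hpp⟩ : ∃ p : 𝕄, pᴴ = p ∧ p * p = P := by
    open scoped MatrixOrder in
    exact ⟨CFC.sqrt P, (CFC.sqrt_nonneg P).posSemidef.1, CFC.sqrt_mul_sqrt_self P hP.posSemidef.nonneg⟩
  obtain ⟨q, hqH, hqq⟩ : ∃ q : 𝕄, qᴴ = q ∧ q * q = Q := by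
    open scoped MatrixOrder in
    exact ⟨CFC.sqrt Q, (CFC.sqrt_nonneg Q).posSemidef.1, CFC.sqrt_mul_sqrt_self Q hQ.posSemidef.nonneg⟩
  have key : Matrix.trace (P * V * Q * Vᴴ) = Matrix.trace ((p * V * q) * (p * V * q)ᴴ) := by
    have hct : (p * V * q)ᴴ = q * Vᴴ * p := by
      simp [Matrix.conjTranspose_mul, hpH, hqH, Matrix.mul_assoc]
    rw [hct]
    have h1 : P * V * Q * Vᴴ = p * (p * V * q * (q * Vᴴ)) := by
      rw [← hpp, ← hqq]; noncomm_ring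
    rw [h1, Matrix.trace_mul_comm]
    noncomm_ring
  rw [key]
  exact trace_mul_conjTranspose_self_re_nonneg _

lemma isHermitian_real_symm {S : Matrix (Fin n) (Fin n) ℝ} (hS : S.IsHermitian) (i j : Fin n) :
    S i j = S j i := by
  have := congrFun (congrFun hS j) i
  simpa [Matrix.conjTranspose_apply] using this

lemma sum_trace_posdef_nonneg (c : Matrix (Fin n) (Fin n) ℝ) (hc : c.PosDef)
    {P Q : 𝕄} (hP : P.PosDef) (hQ : Q.PosDef) (M : Fin n → 𝕄) :
    0 ≤ (∑ i, ∑ j, ((c i j : ℝ) : ℂ) * Matrix.trace (P * M i * Q * (M j)ᴴ)).re := by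
  classical
  open scoped MatrixOrder in
  set S : Matrix (Fin n) (Fin n) ℝ := CFC.sqrt c with hSdef
  have hSS : S * S = c := by
    open scoped MatrixOrder in
    exact CFC.sqrt_mul_sqrt_self c hc.posSemidef.nonneg
  have hSsymm : ∀ i j, S i j = S j i := isHermitian_real_symm (by
    open scoped MatrixOrder in
    exact (CFC.sqrt_nonneg c).posSemidef.1)
  set V : Fin n → 𝕄 := fun k => ∑ i, ((S k i : ℝ) : ℂ) • M i with hVdef
  have hVH : ∀ k, (V k)ᴴ = ∑ j, ((S k j : ℝ) : ℂ) • (M j)ᴴ := by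
    intro k
    rw [hVdef]
    rw [Matrix.conjTranspose_sum]
    congr 1
    funext j
    rw [Matrix.conjTranspose_smul]
    congr 1
    exact Complex.conj_ofReal _
  have hper : ∀ k, Matrix.trace (P * V k * Q * (V k)ᴴ)
      = ∑ i, ∑ j, (((S k i : ℝ) : ℂ) * ((S k j : ℝ) : ℂ)) * Matrix.trace (P * M i * Q * (M j)ᴴ) := by
    intro k
    rw [hVH k, hVdef]
    simp only [Finset.mul_sum, Finset.sum_mul, Matrix.mul_smul, Matrix.smul_mul,
      Matrix.trace_sum, Matrix.trace_smul, smul_eq_mul, smul_smul]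
    rw [Finset.sum_comm]
    congr 1; funext i; congr 1; funext j
    ring
  have hsum : ∑ k, Matrix.trace (P * V k * Q * (V k)ᴴ)
      = ∑ i, ∑ j, ((c i j : ℝ) : ℂ) * Matrix.trace (P * M i * Q * (M j)ᴴ) := by
    simp only [hper]
    rw [Finset.sum_comm]
    congr 1; funext i
    rw [Finset.sum_comm]
    congr 1; funext j
    rw [← Finset.sum_mul]
    congr 1
    have : c i j = ∑ k, S k i * S k j := by
      rw [← hSS, Matrix.mul_apply]
      congr 1; funext k
      rw [hSsymm i k]
    rw [this]
    push_cast
    rfl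
  rw [← hsum, Complex.re_sum]
  apply Finset.sum_nonneg
  intro k _
  exact trace_posdef_pair_nonneg hP hQ (V k)



set_option maxHeartbeats 2000000 in
lemma perpair {r : ℕ} (A B F G ai aj bi bj D E ti tj : Matrix (Fin r) (Fin r) ℂ)
    (hFA : F * A = 1) (hAF : A * F = 1) (hGB : G * B = 1) (hBG : B * G = 1) :
    Matrix.trace ((F * (ai * (F * (aj * (F * (B)))))) + (F * (aj * (F * (ai * (F * (B)))))) + (-(F * (D * (F * (B))))) + (-(F * (aj * (F * (bi))))) + (-(F * (ai * (F * (bj))))) + (F * (E)) + (G * (bi * (G * (bj * (G * (A)))))) + (G * (bj * (G * (bi * (G * (A)))))) + (-(G * (E * (G * (A))))) + (-(G * (bj * (G * (ai))))) + (-(G * (bi * (G * (aj))))) + (G * (D)))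
      = (-(Matrix.trace (F * (D - aj * F * ai) * (F * B))) + 4 * Matrix.trace (F * (A * ti * F * tj * A - tj * A * ti) * (F * B)) + Matrix.trace (F * (E - bj * G * bi)) - 4 * Matrix.trace (F * (B * ti * G * tj * B - tj * B * ti)) + (-(Matrix.trace (G * (E - bj * G * bi) * (G * A))) + 4 * Matrix.trace (G * (B * ti * G * tj * B - tj * B * ti) * (G * A)) + Matrix.trace (G * (D - aj * F * ai)) - 4 * Matrix.trace (G * (A * ti * F * tj * A - tj * A * ti))))
        + (Matrix.trace (F * (ai * F * B - bi) * G * (B * F * aj - bj)) + Matrix.trace (G * (bi * G * A - ai) * F * (A * G * bj - aj)) + 4 * Matrix.trace (F * (B * ti - A * ti * F * B) * G * (tj * B - B * F * tj * A)) + 4 * Matrix.trace (G * (A * ti - B * ti * G * A) * F * (tj * A - A * G * tj * B)))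
        + (Matrix.trace (F * (ai * (F * (aj * (F * (B)))))) - Matrix.trace (F * (aj * (F * (ai * (F * (B)))))) + Matrix.trace (G * (bi * (G * (bj * (G * (A)))))) - Matrix.trace (G * (bj * (G * (bi * (G * (A)))))) + Matrix.trace (F * (bj * (G * (bi)))) - Matrix.trace (F * (bi * (G * (bj)))) + Matrix.trace (G * (aj * (F * (ai)))) - Matrix.trace (G * (ai * (F * (aj))))) := by
  have hFA' : ∀ M : Matrix (Fin r) (Fin r) ℂ, F * (A * M) = M := fun M => by
    rw [← Matrix.mul_assoc, hFA, Matrix.one_mul]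
  have hAF' : ∀ M : Matrix (Fin r) (Fin r) ℂ, A * (F * M) = M := fun M => by
    rw [← Matrix.mul_assoc, hAF, Matrix.one_mul]
  have hGB' : ∀ M : Matrix (Fin r) (Fin r) ℂ, G * (B * M) = M := fun M => by
    rw [← Matrix.mul_assoc, hGB, Matrix.one_mul]
  have hBG' : ∀ M : Matrix (Fin r) (Fin r) ℂ, B * (G * M) = M := fun M => by
    rw [← Matrix.mul_assoc, hBG, Matrix.one_mul]
  have hrot1 : Matrix.trace (F * (bi * (F * (aj)))) = Matrix.trace (F * (aj * (F * (bi)))) := by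
    rw [show (F * (bi * (F * (aj)))) = (F * (bi)) * (F * (aj)) from by noncomm_ring, Matrix.trace_mul_comm]
    all_goals congr 1
    all_goals simp only [Matrix.mul_assoc, hFA, hAF, hGB, hBG, hFA', hAF', hGB', hBG', Matrix.one_mul, Matrix.mul_one]
  have hrot2 : Matrix.trace (F * (tj * (A * (ti * (F * (B)))))) = Matrix.trace (A * (ti * (F * (B * (F * (tj)))))) := by
    rw [show (F * (tj * (A * (ti * (F * (B)))))) = (F * (tj)) * (A * (ti * (F * (B)))) from by noncomm_ring, Matrix.trace_mul_comm]
    all_goals congr 1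
    all_goals simp only [Matrix.mul_assoc, hFA, hAF, hGB, hBG, hFA', hAF', hGB', hBG', Matrix.one_mul, Matrix.mul_one]
  have hrot3 : Matrix.trace (ti * (F * (B * (F * (tj * (A)))))) = Matrix.trace (A * (ti * (F * (B * (F * (tj)))))) := by
    rw [show (ti * (F * (B * (F * (tj * (A)))))) = (ti * (F * (B * (F * (tj))))) * (A) from by noncomm_ring, Matrix.trace_mul_comm]
    all_goals congr 1
    all_goals simp only [Matrix.mul_assoc, hFA, hAF, hGB, hBG, hFA', hAF', hGB', hBG', Matrix.one_mul, Matrix.mul_one]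
  have hrot4 : Matrix.trace (G * (A * (ti * (G * (tj * (B)))))) = Matrix.trace (A * (ti * (G * (tj)))) := by
    rw [show (G * (A * (ti * (G * (tj * (B)))))) = (G) * (A * (ti * (G * (tj * (B))))) from by noncomm_ring, Matrix.trace_mul_comm]
    all_goals congr 1
    all_goals simp only [Matrix.mul_assoc, hFA, hAF, hGB, hBG, hFA', hAF', hGB', hBG', Matrix.one_mul, Matrix.mul_one]
  have hrot5 : Matrix.trace (G * (tj * (A * (ti)))) = Matrix.trace (A * (ti * (G * (tj)))) := by
    rw [show (G * (tj * (A * (ti)))) = (G * (tj)) * (A * (ti)) from by noncomm_ring, Matrix.trace_mul_comm]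
    all_goals congr 1
    all_goals simp only [Matrix.mul_assoc, hFA, hAF, hGB, hBG, hFA', hAF', hGB', hBG', Matrix.one_mul, Matrix.mul_one]
  have hrot6 : Matrix.trace (ti * (G * (tj * (A)))) = Matrix.trace (A * (ti * (G * (tj)))) := by
    rw [show (ti * (G * (tj * (A)))) = (ti * (G * (tj))) * (A) from by noncomm_ring, Matrix.trace_mul_comm]
    all_goals congr 1
    all_goals simp only [Matrix.mul_assoc, hFA, hAF, hGB, hBG, hFA', hAF', hGB', hBG', Matrix.one_mul, Matrix.mul_one]
  have hrot7 : Matrix.trace (F * (ai * (F * (B * (F * (aj)))))) = Matrix.trace (B * (F * (aj * (F * (ai * (F)))))) := by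
    rw [show (F * (ai * (F * (B * (F * (aj)))))) = (F * (ai * (F))) * (B * (F * (aj))) from by noncomm_ring, Matrix.trace_mul_comm]
    all_goals congr 1
    all_goals simp only [Matrix.mul_assoc, hFA, hAF, hGB, hBG, hFA', hAF', hGB', hBG', Matrix.one_mul, Matrix.mul_one]
  have hrot8 : Matrix.trace (F * (aj * (F * (ai * (F * (B)))))) = Matrix.trace (B * (F * (aj * (F * (ai * (F)))))) := by
    rw [show (F * (aj * (F * (ai * (F * (B)))))) = (F * (aj * (F * (ai * (F))))) * (B) from by noncomm_ring, Matrix.trace_mul_comm]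
    all_goals congr 1
    all_goals simp only [Matrix.mul_assoc, hFA, hAF, hGB, hBG, hFA', hAF', hGB', hBG', Matrix.one_mul, Matrix.mul_one]
  have hrot9 : Matrix.trace (F * (B * (ti * (F * (tj * (A)))))) = Matrix.trace (B * (ti * (F * (tj)))) := by
    rw [show (F * (B * (ti * (F * (tj * (A)))))) = (F) * (B * (ti * (F * (tj * (A))))) from by noncomm_ring, Matrix.trace_mul_comm]
    all_goals congr 1
    all_goals simp only [Matrix.mul_assoc, hFA, hAF, hGB, hBG, hFA', hAF', hGB', hBG', Matrix.one_mul, Matrix.mul_one]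
  have hrot10 : Matrix.trace (F * (tj * (B * (ti)))) = Matrix.trace (B * (ti * (F * (tj)))) := by
    rw [show (F * (tj * (B * (ti)))) = (F * (tj)) * (B * (ti)) from by noncomm_ring, Matrix.trace_mul_comm]
    all_goals congr 1
    all_goals simp only [Matrix.mul_assoc, hFA, hAF, hGB, hBG, hFA', hAF', hGB', hBG', Matrix.one_mul, Matrix.mul_one]
  have hrot11 : Matrix.trace (ti * (F * (tj * (B)))) = Matrix.trace (B * (ti * (F * (tj)))) := by
    rw [show (ti * (F * (tj * (B)))) = (ti * (F * (tj))) * (B) from by noncomm_ring, Matrix.trace_mul_comm]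
    all_goals congr 1
    all_goals simp only [Matrix.mul_assoc, hFA, hAF, hGB, hBG, hFA', hAF', hGB', hBG', Matrix.one_mul, Matrix.mul_one]
  have hrot12 : Matrix.trace (G * (bi * (G * (bj * (G * (A)))))) = Matrix.trace (A * (G * (bi * (G * (bj * (G)))))) := by
    rw [show (G * (bi * (G * (bj * (G * (A)))))) = (G * (bi * (G * (bj * (G))))) * (A) from by noncomm_ring, Matrix.trace_mul_comm]
    all_goals congr 1
    all_goals simp only [Matrix.mul_assoc, hFA, hAF, hGB, hBG, hFA', hAF', hGB', hBG', Matrix.one_mul, Matrix.mul_one]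
  have hrot13 : Matrix.trace (G * (A * (ti * (F * (tj * (A)))))) = Matrix.trace (A * (G * (A * (ti * (F * (tj)))))) := by
    rw [show (G * (A * (ti * (F * (tj * (A)))))) = (G * (A * (ti * (F * (tj))))) * (A) from by noncomm_ring, Matrix.trace_mul_comm]
    all_goals congr 1
    all_goals simp only [Matrix.mul_assoc, hFA, hAF, hGB, hBG, hFA', hAF', hGB', hBG', Matrix.one_mul, Matrix.mul_one]
  have hrot14 : Matrix.trace (G * (E * (G * (A)))) = Matrix.trace (A * (G * (E * (G)))) := by
    rw [show (G * (E * (G * (A)))) = (G * (E * (G))) * (A) from by noncomm_ring, Matrix.trace_mul_comm]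
    all_goals congr 1
    all_goals simp only [Matrix.mul_assoc, hFA, hAF, hGB, hBG, hFA', hAF', hGB', hBG', Matrix.one_mul, Matrix.mul_one]
  have hrot15 : Matrix.trace (G * (tj * (B * (ti * (G * (A)))))) = Matrix.trace (A * (G * (tj * (B * (ti * (G)))))) := by
    rw [show (G * (tj * (B * (ti * (G * (A)))))) = (G * (tj * (B * (ti * (G))))) * (A) from by noncomm_ring, Matrix.trace_mul_comm]
    all_goals congr 1
    all_goals simp only [Matrix.mul_assoc, hFA, hAF, hGB, hBG, hFA', hAF', hGB', hBG', Matrix.one_mul, Matrix.mul_one]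
  have hrot16 : Matrix.trace (ti * (G * (A * (G * (tj * (B)))))) = Matrix.trace (A * (G * (tj * (B * (ti * (G)))))) := by
    rw [show (ti * (G * (A * (G * (tj * (B)))))) = (ti * (G)) * (A * (G * (tj * (B)))) from by noncomm_ring, Matrix.trace_mul_comm]
    all_goals congr 1
    all_goals simp only [Matrix.mul_assoc, hFA, hAF, hGB, hBG, hFA', hAF', hGB', hBG', Matrix.one_mul, Matrix.mul_one]
  have hrot17 : Matrix.trace (G * (bi * (G * (A * (G * (bj)))))) = Matrix.trace (A * (G * (bj * (G * (bi * (G)))))) := by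
    rw [show (G * (bi * (G * (A * (G * (bj)))))) = (G * (bi * (G))) * (A * (G * (bj))) from by noncomm_ring, Matrix.trace_mul_comm]
    all_goals congr 1
    all_goals simp only [Matrix.mul_assoc, hFA, hAF, hGB, hBG, hFA', hAF', hGB', hBG', Matrix.one_mul, Matrix.mul_one]
  have hrot18 : Matrix.trace (G * (bj * (G * (bi * (G * (A)))))) = Matrix.trace (A * (G * (bj * (G * (bi * (G)))))) := by
    rw [show (G * (bj * (G * (bi * (G * (A)))))) = (G * (bj * (G * (bi * (G))))) * (A) from by noncomm_ring, Matrix.trace_mul_comm]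
    all_goals congr 1
    all_goals simp only [Matrix.mul_assoc, hFA, hAF, hGB, hBG, hFA', hAF', hGB', hBG', Matrix.one_mul, Matrix.mul_one]
  have hrot19 : Matrix.trace (F * (ai * (F * (aj * (F * (B)))))) = Matrix.trace (B * (F * (ai * (F * (aj * (F)))))) := by
    rw [show (F * (ai * (F * (aj * (F * (B)))))) = (F * (ai * (F * (aj * (F))))) * (B) from by noncomm_ring, Matrix.trace_mul_comm]
    all_goals congr 1
    all_goals simp only [Matrix.mul_assoc, hFA, hAF, hGB, hBG, hFA', hAF', hGB', hBG', Matrix.one_mul, Matrix.mul_one]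
  have hrot20 : Matrix.trace (G * (aj * (F * (ai)))) = Matrix.trace (F * (ai * (G * (aj)))) := by
    rw [show (G * (aj * (F * (ai)))) = (G * (aj)) * (F * (ai)) from by noncomm_ring, Matrix.trace_mul_comm]
    all_goals congr 1
    all_goals simp only [Matrix.mul_assoc, hFA, hAF, hGB, hBG, hFA', hAF', hGB', hBG', Matrix.one_mul, Matrix.mul_one]
  have hrot21 : Matrix.trace (F * (E)) = Matrix.trace (E * (F)) := by
    rw [show (F * (E)) = (F) * (E) from by noncomm_ring, Matrix.trace_mul_comm]
    all_goals congr 1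
    all_goals simp only [Matrix.mul_assoc, hFA, hAF, hGB, hBG, hFA', hAF', hGB', hBG', Matrix.one_mul, Matrix.mul_one]
  have hrot22 : Matrix.trace (G * (bi * (G * (aj)))) = Matrix.trace (G * (aj * (G * (bi)))) := by
    rw [show (G * (bi * (G * (aj)))) = (G * (bi)) * (G * (aj)) from by noncomm_ring, Matrix.trace_mul_comm]
    all_goals congr 1
    all_goals simp only [Matrix.mul_assoc, hFA, hAF, hGB, hBG, hFA', hAF', hGB', hBG', Matrix.one_mul, Matrix.mul_one]
  have hrot23 : Matrix.trace (G * (D)) = Matrix.trace (D * (G)) := by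
    rw [show (G * (D)) = (G) * (D) from by noncomm_ring, Matrix.trace_mul_comm]
    all_goals congr 1
    all_goals simp only [Matrix.mul_assoc, hFA, hAF, hGB, hBG, hFA', hAF', hGB', hBG', Matrix.one_mul, Matrix.mul_one]
  have hrot24 : Matrix.trace (G * (bj * (G * (ai)))) = Matrix.trace (G * (ai * (G * (bj)))) := by
    rw [show (G * (bj * (G * (ai)))) = (G * (bj)) * (G * (ai)) from by noncomm_ring, Matrix.trace_mul_comm]
    all_goals congr 1
    all_goals simp only [Matrix.mul_assoc, hFA, hAF, hGB, hBG, hFA', hAF', hGB', hBG', Matrix.one_mul, Matrix.mul_one]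
  have hrot25 : Matrix.trace (F * (B * (ti * (G * (tj * (B)))))) = Matrix.trace (B * (F * (B * (ti * (G * (tj)))))) := by
    rw [show (F * (B * (ti * (G * (tj * (B)))))) = (F * (B * (ti * (G * (tj))))) * (B) from by noncomm_ring, Matrix.trace_mul_comm]
    all_goals congr 1
    all_goals simp only [Matrix.mul_assoc, hFA, hAF, hGB, hBG, hFA', hAF', hGB', hBG', Matrix.one_mul, Matrix.mul_one]
  have hrot26 : Matrix.trace (G * (ai * (F * (aj)))) = Matrix.trace (F * (aj * (G * (ai)))) := by
    rw [show (G * (ai * (F * (aj)))) = (G * (ai)) * (F * (aj)) from by noncomm_ring, Matrix.trace_mul_comm]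
    all_goals congr 1
    all_goals simp only [Matrix.mul_assoc, hFA, hAF, hGB, hBG, hFA', hAF', hGB', hBG', Matrix.one_mul, Matrix.mul_one]
  have hrot27 : Matrix.trace (F * (D * (F * (B)))) = Matrix.trace (B * (F * (D * (F)))) := by
    rw [show (F * (D * (F * (B)))) = (F * (D * (F))) * (B) from by noncomm_ring, Matrix.trace_mul_comm]
    all_goals congr 1
    all_goals simp only [Matrix.mul_assoc, hFA, hAF, hGB, hBG, hFA', hAF', hGB', hBG', Matrix.one_mul, Matrix.mul_one]
  simp only [Matrix.mul_sub, Matrix.sub_mul, Matrix.trace_add, Matrix.trace_sub, Matrix.trace_neg,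
    Matrix.mul_assoc, hFA, hAF, hGB, hBG, hFA', hAF', hGB', hBG', Matrix.one_mul, Matrix.mul_one]
  rw [hrot1, hrot2, hrot3, hrot4, hrot5, hrot6, hrot7, hrot8, hrot9, hrot10, hrot11, hrot12, hrot13, hrot14, hrot15, hrot16, hrot17, hrot18, hrot19, hrot20, hrot21, hrot22, hrot23, hrot24, hrot25, hrot26, hrot27]
  ring


noncomputable def traceL {r : ℕ} (P Q : Matrix (Fin r) (Fin r) ℂ) :
    Matrix (Fin r) (Fin r) ℂ →ₗ[ℂ] ℂ where
  toFun M := Matrix.trace (P * M * Q)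
  map_add' M N := by simp [Matrix.mul_add, Matrix.add_mul]
  map_smul' c M := by simp [Matrix.mul_smul, Matrix.smul_mul]

noncomputable def traceR {r : ℕ} (P : Matrix (Fin r) (Fin r) ℂ) :
    Matrix (Fin r) (Fin r) ℂ →ₗ[ℂ] ℂ where
  toFun M := Matrix.trace (P * M)
  map_add' M N := by simp [Matrix.mul_add]
  map_smul' c M := by simp [Matrix.mul_smul]

@[simp] lemma traceL_apply {r : ℕ} (P Q M : Matrix (Fin r) (Fin r) ℂ) :
    traceL P Q M = Matrix.trace (P * M * Q) := rfl

@[simp] lemma traceR_apply {r : ℕ} (P M : Matrix (Fin r) (Fin r) ℂ) :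
    traceR P M = Matrix.trace (P * M) := rfl

set_option maxHeartbeats 4000000 in
lemma grand {r n : ℕ} (γ : Fin n → Fin n → ℂ) (hγ : ∀ i j, γ i j = γ j i)
    (A B F G : Matrix (Fin r) (Fin r) ℂ)
    (hFA : F * A = 1) (hAF : A * F = 1) (hGB : G * B = 1) (hBG : B * G = 1)
    (Ai Bi : Fin n → Matrix (Fin r) (Fin r) ℂ)
    (AD BD : Fin n → Fin n → Matrix (Fin r) (Fin r) ℂ)
    (th thd : Fin n → Matrix (Fin r) (Fin r) ℂ) (lam : ℝ)
    (Ht Kt : Matrix (Fin r) (Fin r) ℂ)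
    (hHt : Ht = (∑ i, ∑ j, γ i j • (AD i j - Ai j * F * Ai i)) + ((4 * lam : ℝ) : ℂ) • A
        - (4 : ℂ) • ∑ i, ∑ j, γ i j • (A * th i * F * thd j * A - thd j * A * th i))
    (hKt : Kt = (∑ i, ∑ j, γ i j • (BD i j - Bi j * G * Bi i)) + ((4 * lam : ℝ) : ℂ) • B
        - (4 : ℂ) • ∑ i, ∑ j, γ i j • (B * th i * G * thd j * B - thd j * B * th i)) :
    (∑ i, ∑ j, γ i j * Matrix.trace ((F * ((Ai i) * (F * ((Ai j) * (F * (B)))))) + (F * ((Ai j) * (F * ((Ai i) * (F * (B)))))) + (-(F * ((AD i j) * (F * (B))))) + (-(F * ((Ai j) * (F * ((Bi i)))))) + (-(F * ((Ai i) * (F * ((Bi j)))))) + (F * ((BD i j))) + (G * ((Bi i) * (G * ((Bi j) * (G * (A)))))) + (G * ((Bi j) * (G * ((Bi i) * (G * (A)))))) + (-(G * ((BD i j) * (G * (A))))) + (-(G * ((Bi j) * (G * ((Ai i)))))) + (-(G * ((Bi i) * (G * ((Ai j)))))) + (G * ((AD i j)))))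
      - Matrix.trace (-(F * Ht * F) * B + F * Kt + (-(G * Kt * G) * A + G * Ht))
    = (∑ i, ∑ j, γ i j * Matrix.trace (F * (Ai i * F * B - Bi i) * G * (B * F * Ai j - Bi j)))
      + (∑ i, ∑ j, γ i j * Matrix.trace (G * (Bi i * G * A - Ai i) * F * (A * G * Bi j - Ai j)))
      + (4 : ℂ) * (∑ i, ∑ j, γ i j *
          Matrix.trace (F * (B * th i - A * th i * F * B) * G * (thd j * B - B * F * thd j * A)))
      + (4 : ℂ) * (∑ i, ∑ j, γ i j *
          Matrix.trace (G * (A * th i - B * th i * G * A) * F * (thd j * A - A * G * thd j * B))) := by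
  have hlam1 : traceL F (F * B) A = traceR F B := by
    simp only [traceL_apply, traceR_apply]
    rw [show F * A * (F * B) = (F * A) * (F * B) from by noncomm_ring, hFA, Matrix.one_mul]
  have hlam2 : traceL G (G * A) B = traceR G A := by
    simp only [traceL_apply, traceR_apply]
    rw [show G * B * (G * A) = (G * B) * (G * A) from by noncomm_ring, hGB, Matrix.one_mul]
  have hNshape : Matrix.trace (-(F * Ht * F) * B + F * Kt + (-(G * Kt * G) * A + G * Ht))
      = -(traceL F (F * B) Ht) + traceR F Kt + (-(traceL G (G * A) Kt) + traceR G Ht) := by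
    simp only [traceL_apply, traceR_apply]
    rw [show -(F * Ht * F) * B + F * Kt + (-(G * Kt * G) * A + G * Ht)
        = -(F * Ht * (F * B)) + F * Kt + (-(G * Kt * (G * A)) + G * Ht) from by noncomm_ring]
    rw [show F * Ht * (F * B) = F * Ht * (F * B) from rfl]
    simp only [Matrix.trace_add, Matrix.trace_neg, Matrix.mul_assoc]
  have eH1 : traceL F (F * B) Ht
      = (∑ i, ∑ j, γ i j * traceL F (F * B) (AD i j - Ai j * F * Ai i))
        + ((4 * lam : ℝ) : ℂ) * traceR F B
        - (4 : ℂ) * ∑ i, ∑ j, γ i j * traceL F (F * B) (A * th i * F * thd j * A - thd j * A * th i) := by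
    rw [hHt, map_sub, map_add, _root_.map_smul, _root_.map_smul, map_sum, map_sum, hlam1]
    simp only [map_sum, _root_.map_smul, smul_eq_mul]
  have eH2 : traceR F Kt
      = (∑ i, ∑ j, γ i j * traceR F (BD i j - Bi j * G * Bi i))
        + ((4 * lam : ℝ) : ℂ) * traceR F B
        - (4 : ℂ) * ∑ i, ∑ j, γ i j * traceR F (B * th i * G * thd j * B - thd j * B * th i) := by
    rw [hKt, map_sub, map_add, _root_.map_smul, _root_.map_smul, map_sum, map_sum]
    simp only [map_sum, _root_.map_smul, smul_eq_mul]
  have eH3 : traceL G (G * A) Kt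
      = (∑ i, ∑ j, γ i j * traceL G (G * A) (BD i j - Bi j * G * Bi i))
        + ((4 * lam : ℝ) : ℂ) * traceR G A
        - (4 : ℂ) * ∑ i, ∑ j, γ i j * traceL G (G * A) (B * th i * G * thd j * B - thd j * B * th i) := by
    rw [hKt, map_sub, map_add, _root_.map_smul, _root_.map_smul, map_sum, map_sum, hlam2]
    simp only [map_sum, _root_.map_smul, smul_eq_mul]
  have eH4 : traceR G Ht
      = (∑ i, ∑ j, γ i j * traceR G (AD i j - Ai j * F * Ai i))
        + ((4 * lam : ℝ) : ℂ) * traceR G A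
        - (4 : ℂ) * ∑ i, ∑ j, γ i j * traceR G (A * th i * F * thd j * A - thd j * A * th i) := by
    rw [hHt, map_sub, map_add, _root_.map_smul, _root_.map_smul, map_sum, map_sum]
    simp only [map_sum, _root_.map_smul, smul_eq_mul]
  have hanti : ∀ i j : Fin n, (Matrix.trace (F * ((Ai i) * (F * ((Ai j) * (F * (B)))))) - Matrix.trace (F * ((Ai j) * (F * ((Ai i) * (F * (B)))))) + Matrix.trace (G * ((Bi i) * (G * ((Bi j) * (G * (A)))))) - Matrix.trace (G * ((Bi j) * (G * ((Bi i) * (G * (A)))))) + Matrix.trace (F * ((Bi j) * (G * ((Bi i))))) - Matrix.trace (F * ((Bi i) * (G * ((Bi j))))) + Matrix.trace (G * ((Ai j) * (F * ((Ai i))))) - Matrix.trace (G * ((Ai i) * (F * ((Ai j)))))) = -((Matrix.trace (F * (Ai j * (F * (Ai i * (F * B)))))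
      - Matrix.trace (F * (Ai i * (F * (Ai j * (F * B)))))
      + Matrix.trace (G * (Bi j * (G * (Bi i * (G * A)))))
      - Matrix.trace (G * (Bi i * (G * (Bi j * (G * A)))))
      + Matrix.trace (F * (Bi i * (G * Bi j))) - Matrix.trace (F * (Bi j * (G * Bi i)))
      + Matrix.trace (G * (Ai i * (F * Ai j))) - Matrix.trace (G * (Ai j * (F * Ai i))))) := by
    intro i j
    ring
  have hDg : (∑ i, ∑ j, γ i j * (Matrix.trace (F * ((Ai i) * (F * ((Ai j) * (F * (B)))))) - Matrix.trace (F * ((Ai j) * (F * ((Ai i) * (F * (B)))))) + Matrix.trace (G * ((Bi i) * (G * ((Bi j) * (G * (A)))))) - Matrix.trace (G * ((Bi j) * (G * ((Bi i) * (G * (A)))))) + Matrix.trace (F * ((Bi j) * (G * ((Bi i))))) - Matrix.trace (F * ((Bi i) * (G * ((Bi j))))) + Matrix.trace (G * ((Ai j) * (F * ((Ai i))))) - Matrix.trace (G * ((Ai i) * (F * ((Ai j))))))) = 0 := by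
    have hswap : (∑ i, ∑ j, γ i j * (Matrix.trace (F * ((Ai i) * (F * ((Ai j) * (F * (B)))))) - Matrix.trace (F * ((Ai j) * (F * ((Ai i) * (F * (B)))))) + Matrix.trace (G * ((Bi i) * (G * ((Bi j) * (G * (A)))))) - Matrix.trace (G * ((Bi j) * (G * ((Bi i) * (G * (A)))))) + Matrix.trace (F * ((Bi j) * (G * ((Bi i))))) - Matrix.trace (F * ((Bi i) * (G * ((Bi j))))) + Matrix.trace (G * ((Ai j) * (F * ((Ai i))))) - Matrix.trace (G * ((Ai i) * (F * ((Ai j)))))))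
        = ∑ i, ∑ j, -(γ i j * (Matrix.trace (F * ((Ai i) * (F * ((Ai j) * (F * (B)))))) - Matrix.trace (F * ((Ai j) * (F * ((Ai i) * (F * (B)))))) + Matrix.trace (G * ((Bi i) * (G * ((Bi j) * (G * (A)))))) - Matrix.trace (G * ((Bi j) * (G * ((Bi i) * (G * (A)))))) + Matrix.trace (F * ((Bi j) * (G * ((Bi i))))) - Matrix.trace (F * ((Bi i) * (G * ((Bi j))))) + Matrix.trace (G * ((Ai j) * (F * ((Ai i))))) - Matrix.trace (G * ((Ai i) * (F * ((Ai j))))))) := by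
      rw [Finset.sum_comm]
      refine Finset.sum_congr rfl fun i _ => Finset.sum_congr rfl fun j _ => ?_
      rw [hγ j i, hanti j i]
      ring_nf
    have h2 : (2 : ℂ) * (∑ i, ∑ j, γ i j * (Matrix.trace (F * ((Ai i) * (F * ((Ai j) * (F * (B)))))) - Matrix.trace (F * ((Ai j) * (F * ((Ai i) * (F * (B)))))) + Matrix.trace (G * ((Bi i) * (G * ((Bi j) * (G * (A)))))) - Matrix.trace (G * ((Bi j) * (G * ((Bi i) * (G * (A)))))) + Matrix.trace (F * ((Bi j) * (G * ((Bi i))))) - Matrix.trace (F * ((Bi i) * (G * ((Bi j))))) + Matrix.trace (G * ((Ai j) * (F * ((Ai i))))) - Matrix.trace (G * ((Ai i) * (F * ((Ai j))))))) = 0 := by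
      rw [two_mul]
      nth_rewrite 2 [hswap]
      simp only [Finset.sum_neg_distrib]
      ring
    exact (mul_eq_zero.mp h2).resolve_left two_ne_zero
  have keysum2 : (∑ i, ∑ j, γ i j * Matrix.trace ((F * ((Ai i) * (F * ((Ai j) * (F * (B)))))) + (F * ((Ai j) * (F * ((Ai i) * (F * (B)))))) + (-(F * ((AD i j) * (F * (B))))) + (-(F * ((Ai j) * (F * ((Bi i)))))) + (-(F * ((Ai i) * (F * ((Bi j)))))) + (F * ((BD i j))) + (G * ((Bi i) * (G * ((Bi j) * (G * (A)))))) + (G * ((Bi j) * (G * ((Bi i) * (G * (A)))))) + (-(G * ((BD i j) * (G * (A))))) + (-(G * ((Bi j) * (G * ((Ai i)))))) + (-(G * ((Bi i) * (G * ((Ai j)))))) + (G * ((AD i j)))))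
      = ∑ i : Fin n, ∑ j : Fin n,
        ((-(γ i j * traceL F (F * B) (AD i j - Ai j * F * Ai i))
          + 4 * (γ i j * traceL F (F * B) (A * th i * F * thd j * A - thd j * A * th i))
          + γ i j * traceR F (BD i j - Bi j * G * Bi i)
          - 4 * (γ i j * traceR F (B * th i * G * thd j * B - thd j * B * th i))
          + (-(γ i j * traceL G (G * A) (BD i j - Bi j * G * Bi i))
            + 4 * (γ i j * traceL G (G * A) (B * th i * G * thd j * B - thd j * B * th i))
            + γ i j * traceR G (AD i j - Ai j * F * Ai i)
            - 4 * (γ i j * traceR G (A * th i * F * thd j * A - thd j * A * th i))))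
        + (γ i j * Matrix.trace (F * (Ai i * F * B - Bi i) * G * (B * F * Ai j - Bi j))
          + γ i j * Matrix.trace (G * (Bi i * G * A - Ai i) * F * (A * G * Bi j - Ai j))
          + 4 * (γ i j * Matrix.trace (F * (B * th i - A * th i * F * B) * G * (thd j * B - B * F * thd j * A)))
          + 4 * (γ i j * Matrix.trace (G * (A * th i - B * th i * G * A) * F * (thd j * A - A * G * thd j * B))))
        + γ i j * (Matrix.trace (F * ((Ai i) * (F * ((Ai j) * (F * (B)))))) - Matrix.trace (F * ((Ai j) * (F * ((Ai i) * (F * (B)))))) + Matrix.trace (G * ((Bi i) * (G * ((Bi j) * (G * (A)))))) - Matrix.trace (G * ((Bi j) * (G * ((Bi i) * (G * (A)))))) + Matrix.trace (F * ((Bi j) * (G * ((Bi i))))) - Matrix.trace (F * ((Bi i) * (G * ((Bi j))))) + Matrix.trace (G * ((Ai j) * (F * ((Ai i))))) - Matrix.trace (G * ((Ai i) * (F * ((Ai j))))))) := by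
    refine Finset.sum_congr rfl fun i _ => Finset.sum_congr rfl fun j _ => ?_
    have hp := perpair A B F G (Ai i) (Ai j) (Bi i) (Bi j) (AD i j) (BD i j) (th i) (thd j)
      hFA hAF hGB hBG
    simp only [traceL_apply, traceR_apply]
    linear_combination γ i j * hp
  rw [hNshape, eH1, eH2, eH3, eH4, keysum2]
  simp only [Finset.sum_add_distrib, Finset.sum_sub_distrib, Finset.sum_neg_distrib,
    ← Finset.mul_sum]
  rw [hDg]
  ring


lemma pd_dd {P : X → 𝕄} {x : X} (hP : ContDiffAt ℝ (⊤ : ℕ∞) P x) (j : Fin n) :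
    ContDiffAt ℝ (⊤ : ℕ∞) (fun y => pd j P y) x := by
  letI : NormedAddCommGroup (X →L[ℝ] 𝕄) := ContinuousLinearMap.toNormedAddCommGroup
  letI : NormedSpace ℝ (X →L[ℝ] 𝕄) := ContinuousLinearMap.toNormedSpace
  have h1 : ContDiffAt ℝ (⊤ : ℕ∞) (fderiv ℝ P) x := hP.fderiv_right (m := (⊤ : ℕ∞)) (by simp)
  exact (ContinuousLinearMap.apply ℝ 𝕄 (Pi.single j (1:ℝ))).contDiff.contDiffAt.comp x h1

lemma pd_block {P Q : X → 𝕄} {x : X} (i j : Fin n)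
    (hP : ContDiffAt ℝ (⊤ : ℕ∞) P x) (hQ : ContDiffAt ℝ (⊤ : ℕ∞) Q x)
    (hPinv : ContDiffAt ℝ (⊤ : ℕ∞) (fun z => (P z)⁻¹) x)
    (hpdinvi : pd i (fun z => (P z)⁻¹) x = -((P x)⁻¹ * pd i P x * (P x)⁻¹)) :
    pd i (fun y => -((P y)⁻¹ * pd j P y * (P y)⁻¹) * Q y + (P y)⁻¹ * pd j Q y) x
      = (P x)⁻¹ * pd i P x * (P x)⁻¹ * pd j P x * (P x)⁻¹ * Q x
        + (P x)⁻¹ * pd j P x * (P x)⁻¹ * pd i P x * (P x)⁻¹ * Q x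
        - (P x)⁻¹ * pd i (fun y => pd j P y) x * (P x)⁻¹ * Q x
        - (P x)⁻¹ * pd j P x * (P x)⁻¹ * pd i Q x
        - (P x)⁻¹ * pd i P x * (P x)⁻¹ * pd j Q x
        + (P x)⁻¹ * pd i (fun y => pd j Q y) x := by
  have dP : DifferentiableAt ℝ P x := hP.differentiableAt (by simp)
  have dQ : DifferentiableAt ℝ Q x := hQ.differentiableAt (by simp)
  have dPinv : DifferentiableAt ℝ (fun z => (P z)⁻¹) x := hPinv.differentiableAt (by simp)
  have dpdPj : DifferentiableAt ℝ (fun y => pd j P y) x :=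
    (pd_dd hP j).differentiableAt (by simp)
  have dpdQj : DifferentiableAt ℝ (fun y => pd j Q y) x :=
    (pd_dd hQ j).differentiableAt (by simp)
  have d1 : DifferentiableAt ℝ (fun y => (P y)⁻¹ * pd j P y) x := dmatmul dPinv dpdPj
  have d2 : DifferentiableAt ℝ (fun y => (P y)⁻¹ * pd j P y * (P y)⁻¹) x := dmatmul d1 dPinv
  have d3 : DifferentiableAt ℝ (fun y => -((P y)⁻¹ * pd j P y * (P y)⁻¹)) x := d2.neg
  have d4 : DifferentiableAt ℝ (fun y => -((P y)⁻¹ * pd j P y * (P y)⁻¹) * Q y) x := dmatmul d3 dQ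
  have d5 : DifferentiableAt ℝ (fun y => (P y)⁻¹ * pd j Q y) x := dmatmul dPinv dpdQj
  rw [pd_add d4 d5 i, pd_mul d3 dQ i, pd_neg d2 i, pd_mul d1 dPinv i, pd_mul dPinv dpdPj i,
    pd_mul dPinv dpdQj i, hpdinvi]
  noncomm_ring

end AHYM

open AHYM


set_option maxHeartbeats 4000000 in
/-- **Proposition 3.5 in local affine coordinates.**
If `H(t)` and `K(t)` are two solutions of the affine Hermitian–Yang–Mills flow,
then the Donaldson distance `σ(H(t),K(t)) = tr(H⁻¹K) + tr(K⁻¹H) − 2r` satisfies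
`(Σ g^{ij}∂_i∂_j − ∂ₜ) σ(H(t),K(t)) ≥ 0`. -/
theorem donaldson_distance_of_flows_supersolution
    {n r : ℕ} (hn : 1 ≤ n) (hr : 1 ≤ r)
    (U : Set (Fin n → ℝ)) (hU : IsOpen U)
    (g : (Fin n → ℝ) → Matrix (Fin n) (Fin n) ℝ)
    (hg : ContDiffOn ℝ (⊤ : ℕ∞) g U)
    (hgpos : ∀ x ∈ U, (g x).PosDef)
    (lam : ℝ)
    (θ : Fin n → (Fin n → ℝ) → Matrix (Fin r) (Fin r) ℂ)
    (hθ : ∀ i, ContDiffOn ℝ (⊤ : ℕ∞) (θ i) U)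
    (hθflat : ∀ i j, ∀ x ∈ U, pd i (θ j) x = pd j (θ i) x)
    (hθcomm : ∀ i j, ∀ x ∈ U, θ i x * θ j x = θ j x * θ i x)
    (T : ℝ)
    (H K : (Fin n → ℝ) → ℝ → Matrix (Fin r) (Fin r) ℂ)
    (hHsmooth : ContDiffOn ℝ (⊤ : ℕ∞) (fun p : (Fin n → ℝ) × ℝ => H p.1 p.2) (U ×ˢ Set.Ioo 0 T))
    (hKsmooth : ContDiffOn ℝ (⊤ : ℕ∞) (fun p : (Fin n → ℝ) × ℝ => K p.1 p.2) (U ×ˢ Set.Ioo 0 T))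
    (hHpos : ∀ x ∈ U, ∀ t ∈ Set.Ioo 0 T, (H x t).PosDef)
    (hKpos : ∀ x ∈ U, ∀ t ∈ Set.Ioo 0 T, (K x t).PosDef)
    -- `H` solves the affine Hermitian–Yang–Mills flow
    (hflowH : ∀ x ∈ U, ∀ t ∈ Set.Ioo 0 T,
      deriv (fun s => H x s) t =
        (∑ i, ∑ j, (((g x)⁻¹ i j : ℝ) : ℂ) •
          (pd i (fun y => pd j (fun z => H z t) y) x
            - pd j (fun z => H z t) x * (H x t)⁻¹ * pd i (fun z => H z t) x))
        + ((4 * lam : ℝ) : ℂ) • H x t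
        - (4 : ℂ) • ∑ i, ∑ j, (((g x)⁻¹ i j : ℝ) : ℂ) •
            (H x t * θ i x * (H x t)⁻¹ * (θ j x)ᴴ * H x t - (θ j x)ᴴ * H x t * θ i x))
    -- `K` solves the affine Hermitian–Yang–Mills flow
    (hflowK : ∀ x ∈ U, ∀ t ∈ Set.Ioo 0 T,
      deriv (fun s => K x s) t =
        (∑ i, ∑ j, (((g x)⁻¹ i j : ℝ) : ℂ) •
          (pd i (fun y => pd j (fun z => K z t) y) x
            - pd j (fun z => K z t) x * (K x t)⁻¹ * pd i (fun z => K z t) x))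
        + ((4 * lam : ℝ) : ℂ) • K x t
        - (4 : ℂ) • ∑ i, ∑ j, (((g x)⁻¹ i j : ℝ) : ℂ) •
            (K x t * θ i x * (K x t)⁻¹ * (θ j x)ᴴ * K x t - (θ j x)ᴴ * K x t * θ i x)) :
    -- conclusion : `(Σ g^{ij}∂_i∂_j − ∂ₜ) σ(H(t),K(t)) ≥ 0` on `U × (0,T)`
    ∀ x ∈ U, ∀ t ∈ Set.Ioo 0 T,
      0 ≤ (∑ i, ∑ j, (g x)⁻¹ i j *
            pd i (fun y =>
              pd j (fun z =>
                (Matrix.trace ((H z t)⁻¹ * K z t) + Matrix.trace ((K z t)⁻¹ * H z t)).re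
                  - 2 * r) y) x)
          - deriv (fun s =>
              (Matrix.trace ((H x s)⁻¹ * K x s) + Matrix.trace ((K x s)⁻¹ * H x s)).re
                - 2 * r) t := by
  intro x hx t ht
  classical
  have hUT : IsOpen (U ×ˢ Set.Ioo 0 T) := hU.prod isOpen_Ioo
  have hHx : ∀ y ∈ U, ContDiffAt ℝ (⊤ : ℕ∞) (fun z => H z t) y := by
    intro y hy
    exact (hHsmooth.contDiffAt (hUT.mem_nhds ⟨hy, ht⟩)).comp y (contDiffAt_id.prodMk contDiffAt_const)
  have hKx : ∀ y ∈ U, ContDiffAt ℝ (⊤ : ℕ∞) (fun z => K z t) y := by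
    intro y hy
    exact (hKsmooth.contDiffAt (hUT.mem_nhds ⟨hy, ht⟩)).comp y (contDiffAt_id.prodMk contDiffAt_const)
  have hHtm : ContDiffAt ℝ (⊤ : ℕ∞) (fun s => H x s) t :=
    (hHsmooth.contDiffAt (hUT.mem_nhds ⟨hx, ht⟩)).comp t (contDiffAt_const.prodMk contDiffAt_id)
  have hKtm : ContDiffAt ℝ (⊤ : ℕ∞) (fun s => K x s) t :=
    (hKsmooth.contDiffAt (hUT.mem_nhds ⟨hx, ht⟩)).comp t (contDiffAt_const.prodMk contDiffAt_id)
  have hHdet : ∀ y ∈ U, ∀ s ∈ Set.Ioo 0 T, IsUnit (H y s).det :=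
    fun y hy s hs => ((hHpos y hy s hs).det_pos.ne').isUnit
  have hKdet : ∀ y ∈ U, ∀ s ∈ Set.Ioo 0 T, IsUnit (K y s).det :=
    fun y hy s hs => ((hKpos y hy s hs).det_pos.ne').isUnit
  have hFx : ∀ y ∈ U, ContDiffAt ℝ (⊤ : ℕ∞) (fun z => (H z t)⁻¹) y := fun y hy =>
    (contDiffAt_matrix_inv ((hHpos y hy t ht).det_pos.ne')).comp y (hHx y hy)
  have hGx : ∀ y ∈ U, ContDiffAt ℝ (⊤ : ℕ∞) (fun z => (K z t)⁻¹) y := fun y hy =>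
    (contDiffAt_matrix_inv ((hKpos y hy t ht).det_pos.ne')).comp y (hKx y hy)
  have hFtm : ContDiffAt ℝ (⊤ : ℕ∞) (fun s => (H x s)⁻¹) t :=
    (contDiffAt_matrix_inv ((hHpos x hx t ht).det_pos.ne')).comp t hHtm
  have hGtm : ContDiffAt ℝ (⊤ : ℕ∞) (fun s => (K x s)⁻¹) t :=
    (contDiffAt_matrix_inv ((hKpos x hx t ht).det_pos.ne')).comp t hKtm
  have hpdFU : ∀ y ∈ U, ∀ jj : Fin n,
      pd jj (fun z => (H z t)⁻¹) y
        = -((H y t)⁻¹ * pd jj (fun z => H z t) y * (H y t)⁻¹) := by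
    intro y hy jj
    refine pd_matinv ((hHx y hy).differentiableAt (by simp)) ((hFx y hy).differentiableAt (by simp))
      ?_ (Matrix.mul_nonsing_inv _ (hHdet y hy t ht)) jj
    filter_upwards [hU.mem_nhds hy] with z hz
    exact Matrix.nonsing_inv_mul _ (hHdet z hz t ht)
  have hpdGU : ∀ y ∈ U, ∀ jj : Fin n,
      pd jj (fun z => (K z t)⁻¹) y
        = -((K y t)⁻¹ * pd jj (fun z => K z t) y * (K y t)⁻¹) := by
    intro y hy jj
    refine pd_matinv ((hKx y hy).differentiableAt (by simp)) ((hGx y hy).differentiableAt (by simp))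
      ?_ (Matrix.mul_nonsing_inv _ (hKdet y hy t ht)) jj
    filter_upwards [hU.mem_nhds hy] with z hz
    exact Matrix.nonsing_inv_mul _ (hKdet z hz t ht)
  -- first spatial derivative formula on a neighbourhood of x
  have hDj : ∀ jj : Fin n,
      (fun y => pd jj (fun z =>
          (Matrix.trace ((H z t)⁻¹ * K z t) + Matrix.trace ((K z t)⁻¹ * H z t)).re - 2 * r) y)
        =ᶠ[nhds x] fun y => (Matrix.trace (
            (-((H y t)⁻¹ * pd jj (fun z => H z t) y * (H y t)⁻¹) * K y t
              + (H y t)⁻¹ * pd jj (fun z => K z t) y)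
            + (-((K y t)⁻¹ * pd jj (fun z => K z t) y * (K y t)⁻¹) * H y t
              + (K y t)⁻¹ * pd jj (fun z => H z t) y))).re := by
    intro jj
    filter_upwards [hU.mem_nhds hx] with y hy
    have dA : DifferentiableAt ℝ (fun z => H z t) y := (hHx y hy).differentiableAt (by simp)
    have dB : DifferentiableAt ℝ (fun z => K z t) y := (hKx y hy).differentiableAt (by simp)
    have dF : DifferentiableAt ℝ (fun z => (H z t)⁻¹) y := (hFx y hy).differentiableAt (by simp)
    have dG : DifferentiableAt ℝ (fun z => (K z t)⁻¹) y := (hGx y hy).differentiableAt (by simp)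
    have dFB : DifferentiableAt ℝ (fun z => (H z t)⁻¹ * K z t) y := dmatmul dF dB
    have dGA : DifferentiableAt ℝ (fun z => (K z t)⁻¹ * H z t) y := dmatmul dG dA
    have dtr1 : DifferentiableAt ℝ (fun z => Matrix.trace ((H z t)⁻¹ * K z t)) y :=
      traceCLM.differentiableAt.comp y dFB
    have dtr2 : DifferentiableAt ℝ (fun z => Matrix.trace ((K z t)⁻¹ * H z t)) y :=
      traceCLM.differentiableAt.comp y dGA
    have dsum : DifferentiableAt ℝ
        (fun z => Matrix.trace ((H z t)⁻¹ * K z t) + Matrix.trace ((K z t)⁻¹ * H z t)) y :=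
      dtr1.add dtr2
    have dre : DifferentiableAt ℝ
        (fun z => (Matrix.trace ((H z t)⁻¹ * K z t) + Matrix.trace ((K z t)⁻¹ * H z t)).re) y :=
      Complex.reCLM.differentiableAt.comp y dsum
    have e0 : pd jj (fun z =>
        (Matrix.trace ((H z t)⁻¹ * K z t) + Matrix.trace ((K z t)⁻¹ * H z t)).re - 2 * r) y
        = pd jj (fun z =>
            (Matrix.trace ((H z t)⁻¹ * K z t) + Matrix.trace ((K z t)⁻¹ * H z t)).re) y
          - pd jj (fun _ => (2 * r : ℝ)) y :=
      pd_sub dre (differentiableAt_const _) jj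
    rw [e0, pd_const, sub_zero]
    have e1 : pd jj (fun z =>
        (Matrix.trace ((H z t)⁻¹ * K z t) + Matrix.trace ((K z t)⁻¹ * H z t)).re) y
        = Complex.reCLM (pd jj (fun z =>
            Matrix.trace ((H z t)⁻¹ * K z t) + Matrix.trace ((K z t)⁻¹ * H z t)) y) :=
      pd_clm Complex.reCLM dsum jj
    rw [e1]
    have e2 : pd jj (fun z =>
        Matrix.trace ((H z t)⁻¹ * K z t) + Matrix.trace ((K z t)⁻¹ * H z t)) y
        = pd jj (fun z => Matrix.trace ((H z t)⁻¹ * K z t)) y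
          + pd jj (fun z => Matrix.trace ((K z t)⁻¹ * H z t)) y :=
      pd_add dtr1 dtr2 jj
    have e3 : pd jj (fun z => Matrix.trace ((H z t)⁻¹ * K z t)) y
        = traceCLM (pd jj (fun z => (H z t)⁻¹ * K z t) y) := pd_clm traceCLM dFB jj
    have e4 : pd jj (fun z => Matrix.trace ((K z t)⁻¹ * H z t)) y
        = traceCLM (pd jj (fun z => (K z t)⁻¹ * H z t) y) := pd_clm traceCLM dGA jj
    have e5 : pd jj (fun z => (H z t)⁻¹ * K z t) y
        = pd jj (fun z => (H z t)⁻¹) y * K y t + (H y t)⁻¹ * pd jj (fun z => K z t) y :=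
      pd_mul dF dB jj
    have e6 : pd jj (fun z => (K z t)⁻¹ * H z t) y
        = pd jj (fun z => (K z t)⁻¹) y * H y t + (K y t)⁻¹ * pd jj (fun z => H z t) y :=
      pd_mul dG dA jj
    rw [e2, e3, e4, e5, e6, hpdFU y hy jj, hpdGU y hy jj]
    simp only [traceCLM_apply, Complex.reCLM_apply, ← Matrix.trace_add, Complex.add_re]
  -- second derivative
  have hpdpd : ∀ ii jj : Fin n,
      pd ii (fun y => pd jj (fun z =>
          (Matrix.trace ((H z t)⁻¹ * K z t) + Matrix.trace ((K z t)⁻¹ * H z t)).re - 2 * r) y) x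
      = (Matrix.trace ((((H x t)⁻¹) * ((pd ii (fun z => H z t) x) * (((H x t)⁻¹) * ((pd jj (fun z => H z t) x) * (((H x t)⁻¹) * ((K x t))))))) + (((H x t)⁻¹) * ((pd jj (fun z => H z t) x) * (((H x t)⁻¹) * ((pd ii (fun z => H z t) x) * (((H x t)⁻¹) * ((K x t))))))) + (-(((H x t)⁻¹) * ((pd ii (fun y => pd jj (fun z => H z t) y) x) * (((H x t)⁻¹) * ((K x t)))))) + (-(((H x t)⁻¹) * ((pd jj (fun z => H z t) x) * (((H x t)⁻¹) * ((pd ii (fun z => K z t) x)))))) + (-(((H x t)⁻¹) * ((pd ii (fun z => H z t) x) * (((H x t)⁻¹) * ((pd jj (fun z => K z t) x)))))) + (((H x t)⁻¹) * ((pd ii (fun y => pd jj (fun z => K z t) y) x))) + (((K x t)⁻¹) * ((pd ii (fun z => K z t) x) * (((K x t)⁻¹) * ((pd jj (fun z => K z t) x) * (((K x t)⁻¹) * ((H x t))))))) + (((K x t)⁻¹) * ((pd jj (fun z => K z t) x) * (((K x t)⁻¹) * ((pd ii (fun z => K z t) x) * (((K x t)⁻¹) * ((H x t))))))) + (-(((K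 x t)⁻¹) * ((pd ii (fun y => pd jj (fun z => K z t) y) x) * (((K x t)⁻¹) * ((H x t)))))) + (-(((K x t)⁻¹) * ((pd jj (fun z => K z t) x) * (((K x t)⁻¹) * ((pd ii (fun z => H z t) x)))))) + (-(((K x t)⁻¹) * ((pd ii (fun z => K z t) x) * (((K x t)⁻¹) * ((pd jj (fun z => H z t) x)))))) + (((K x t)⁻¹) * ((pd ii (fun y => pd jj (fun z => H z t) y) x))))).re := by
    intro ii jj
    rw [pd_congr_nhds (hDj jj) ii]
    have hb1 := pd_block (P := fun z => H z t) (Q := fun z => K z t) ii jj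
      (hHx x hx) (hKx x hx) (hFx x hx) (hpdFU x hx ii)
    have hb2 := pd_block (P := fun z => K z t) (Q := fun z => H z t) ii jj
      (hKx x hx) (hHx x hx) (hGx x hx) (hpdGU x hx ii)
    beta_reduce at hb1 hb2
    -- differentiability of the two blocks at x
    have dA : DifferentiableAt ℝ (fun z => H z t) x := (hHx x hx).differentiableAt (by simp)
    have dB : DifferentiableAt ℝ (fun z => K z t) x := (hKx x hx).differentiableAt (by simp)
    have dF : DifferentiableAt ℝ (fun z => (H z t)⁻¹) x := (hFx x hx).differentiableAt (by simp)
    have dG : DifferentiableAt ℝ (fun z => (K z t)⁻¹) x := (hGx x hx).differentiableAt (by simp)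
    have dpdAj : DifferentiableAt ℝ (fun y => pd jj (fun z => H z t) y) x :=
      (pd_dd (hHx x hx) jj).differentiableAt (by simp)
    have dpdBj : DifferentiableAt ℝ (fun y => pd jj (fun z => K z t) y) x :=
      (pd_dd (hKx x hx) jj).differentiableAt (by simp)
    have db1 : DifferentiableAt ℝ (fun y =>
        -((H y t)⁻¹ * pd jj (fun z => H z t) y * (H y t)⁻¹) * K y t
          + (H y t)⁻¹ * pd jj (fun z => K z t) y) x :=
      (dmatmul ((dmatmul (dmatmul dF dpdAj) dF).neg) dB).add (dmatmul dF dpdBj)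
    have db2 : DifferentiableAt ℝ (fun y =>
        -((K y t)⁻¹ * pd jj (fun z => K z t) y * (K y t)⁻¹) * H y t
          + (K y t)⁻¹ * pd jj (fun z => H z t) y) x :=
      (dmatmul ((dmatmul (dmatmul dG dpdBj) dG).neg) dA).add (dmatmul dG dpdAj)
    have dΨ : DifferentiableAt ℝ (fun y =>
        (-((H y t)⁻¹ * pd jj (fun z => H z t) y * (H y t)⁻¹) * K y t
          + (H y t)⁻¹ * pd jj (fun z => K z t) y)
        + (-((K y t)⁻¹ * pd jj (fun z => K z t) y * (K y t)⁻¹) * H y t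
          + (K y t)⁻¹ * pd jj (fun z => H z t) y)) x := db1.add db2
    have dtrΨ : DifferentiableAt ℝ (fun y => Matrix.trace (
        (-((H y t)⁻¹ * pd jj (fun z => H z t) y * (H y t)⁻¹) * K y t
          + (H y t)⁻¹ * pd jj (fun z => K z t) y)
        + (-((K y t)⁻¹ * pd jj (fun z => K z t) y * (K y t)⁻¹) * H y t
          + (K y t)⁻¹ * pd jj (fun z => H z t) y))) x :=
      traceCLM.differentiableAt.comp x dΨ
    have f1 : pd ii (fun y => (Matrix.trace (
        (-((H y t)⁻¹ * pd jj (fun z => H z t) y * (H y t)⁻¹) * K y t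
          + (H y t)⁻¹ * pd jj (fun z => K z t) y)
        + (-((K y t)⁻¹ * pd jj (fun z => K z t) y * (K y t)⁻¹) * H y t
          + (K y t)⁻¹ * pd jj (fun z => H z t) y))).re) x
        = Complex.reCLM (pd ii (fun y => Matrix.trace (
            (-((H y t)⁻¹ * pd jj (fun z => H z t) y * (H y t)⁻¹) * K y t
              + (H y t)⁻¹ * pd jj (fun z => K z t) y)
            + (-((K y t)⁻¹ * pd jj (fun z => K z t) y * (K y t)⁻¹) * H y t
              + (K y t)⁻¹ * pd jj (fun z => H z t) y))) x) := pd_clm Complex.reCLM dtrΨ ii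
    have f2 : pd ii (fun y => Matrix.trace (
            (-((H y t)⁻¹ * pd jj (fun z => H z t) y * (H y t)⁻¹) * K y t
              + (H y t)⁻¹ * pd jj (fun z => K z t) y)
            + (-((K y t)⁻¹ * pd jj (fun z => K z t) y * (K y t)⁻¹) * H y t
              + (K y t)⁻¹ * pd jj (fun z => H z t) y))) x
        = traceCLM (pd ii (fun y =>
            (-((H y t)⁻¹ * pd jj (fun z => H z t) y * (H y t)⁻¹) * K y t
              + (H y t)⁻¹ * pd jj (fun z => K z t) y)
            + (-((K y t)⁻¹ * pd jj (fun z => K z t) y * (K y t)⁻¹) * H y t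
              + (K y t)⁻¹ * pd jj (fun z => H z t) y)) x) := pd_clm traceCLM dΨ ii
    have f3 : pd ii (fun y =>
            (-((H y t)⁻¹ * pd jj (fun z => H z t) y * (H y t)⁻¹) * K y t
              + (H y t)⁻¹ * pd jj (fun z => K z t) y)
            + (-((K y t)⁻¹ * pd jj (fun z => K z t) y * (K y t)⁻¹) * H y t
              + (K y t)⁻¹ * pd jj (fun z => H z t) y)) x
        = pd ii (fun y =>
            -((H y t)⁻¹ * pd jj (fun z => H z t) y * (H y t)⁻¹) * K y t
              + (H y t)⁻¹ * pd jj (fun z => K z t) y) x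
          + pd ii (fun y =>
            -((K y t)⁻¹ * pd jj (fun z => K z t) y * (K y t)⁻¹) * H y t
              + (K y t)⁻¹ * pd jj (fun z => H z t) y) x := pd_add db1 db2 ii
    rw [f1, f2, f3, hb1, hb2]
    simp only [traceCLM_apply, Complex.reCLM_apply]
    congr 2
    noncomm_ring
  -- time derivative
  have hHuF : ∀ᶠ s in nhds t, (H x s)⁻¹ * H x s = 1 := by
    filter_upwards [isOpen_Ioo.mem_nhds ht] with s hs
    exact Matrix.nonsing_inv_mul _ (hHdet x hx s hs)
  have hKuG : ∀ᶠ s in nhds t, (K x s)⁻¹ * K x s = 1 := by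
    filter_upwards [isOpen_Ioo.mem_nhds ht] with s hs
    exact Matrix.nonsing_inv_mul _ (hKdet x hx s hs)
  have dAt : DifferentiableAt ℝ (fun s => H x s) t := hHtm.differentiableAt (by simp)
  have dBt : DifferentiableAt ℝ (fun s => K x s) t := hKtm.differentiableAt (by simp)
  have dFt : DifferentiableAt ℝ (fun s => (H x s)⁻¹) t := hFtm.differentiableAt (by simp)
  have dGt : DifferentiableAt ℝ (fun s => (K x s)⁻¹) t := hGtm.differentiableAt (by simp)
  have hdF : deriv (fun s => (H x s)⁻¹) t
      = -((H x t)⁻¹ * deriv (fun s => H x s) t * (H x t)⁻¹) :=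
    deriv_matinv dAt dFt hHuF (Matrix.mul_nonsing_inv _ (hHdet x hx t ht))
  have hdG : deriv (fun s => (K x s)⁻¹) t
      = -((K x t)⁻¹ * deriv (fun s => K x s) t * (K x t)⁻¹) :=
    deriv_matinv dBt dGt hKuG (Matrix.mul_nonsing_inv _ (hKdet x hx t ht))
  have hderiv : deriv (fun s =>
      (Matrix.trace ((H x s)⁻¹ * K x s) + Matrix.trace ((K x s)⁻¹ * H x s)).re - 2 * r) t
      = (Matrix.trace (
          -((H x t)⁻¹ * deriv (fun s => H x s) t * (H x t)⁻¹) * K x t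
            + (H x t)⁻¹ * deriv (fun s => K x s) t
          + (-((K x t)⁻¹ * deriv (fun s => K x s) t * (K x t)⁻¹) * H x t
            + (K x t)⁻¹ * deriv (fun s => H x s) t))).re := by
    have dFBt : DifferentiableAt ℝ (fun s => (H x s)⁻¹ * K x s) t :=
      (HasDerivAt.matmul dFt.hasDerivAt dBt.hasDerivAt).differentiableAt
    have dGAt : DifferentiableAt ℝ (fun s => (K x s)⁻¹ * H x s) t :=
      (HasDerivAt.matmul dGt.hasDerivAt dAt.hasDerivAt).differentiableAt
    have dtr1 : DifferentiableAt ℝ (fun s => Matrix.trace ((H x s)⁻¹ * K x s)) t :=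
      traceCLM.differentiableAt.comp t dFBt
    have dtr2 : DifferentiableAt ℝ (fun s => Matrix.trace ((K x s)⁻¹ * H x s)) t :=
      traceCLM.differentiableAt.comp t dGAt
    have dsum : DifferentiableAt ℝ
        (fun s => Matrix.trace ((H x s)⁻¹ * K x s) + Matrix.trace ((K x s)⁻¹ * H x s)) t :=
      dtr1.add dtr2
    rw [deriv_sub_const]
    have e1 : deriv (fun s =>
        (Matrix.trace ((H x s)⁻¹ * K x s) + Matrix.trace ((K x s)⁻¹ * H x s)).re) t
        = Complex.reCLM (deriv (fun s =>
            Matrix.trace ((H x s)⁻¹ * K x s) + Matrix.trace ((K x s)⁻¹ * H x s)) t) :=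
      deriv_clm Complex.reCLM dsum
    rw [e1, deriv_fun_add dtr1 dtr2]
    have e3 : deriv (fun s => Matrix.trace ((H x s)⁻¹ * K x s)) t
        = traceCLM (deriv (fun s => (H x s)⁻¹ * K x s) t) := deriv_clm traceCLM dFBt
    have e4 : deriv (fun s => Matrix.trace ((K x s)⁻¹ * H x s)) t
        = traceCLM (deriv (fun s => (K x s)⁻¹ * H x s) t) := deriv_clm traceCLM dGAt
    rw [e3, e4, deriv_matmul dFt dBt, deriv_matmul dGt dAt, hdF, hdG]
    simp only [traceCLM_apply, Complex.reCLM_apply, ← Matrix.trace_add, Complex.add_re]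
  rw [hderiv]
  -- convert the spatial sum
  have hsum1 : (∑ i, ∑ j, (g x)⁻¹ i j *
        pd i (fun y => pd j (fun z =>
          (Matrix.trace ((H z t)⁻¹ * K z t) + Matrix.trace ((K z t)⁻¹ * H z t)).re - 2 * r) y) x)
      = (∑ i, ∑ j, (((g x)⁻¹ i j : ℝ) : ℂ) * Matrix.trace ((((H x t)⁻¹) * ((pd i (fun z => H z t) x) * (((H x t)⁻¹) * ((pd j (fun z => H z t) x) * (((H x t)⁻¹) * ((K x t))))))) + (((H x t)⁻¹) * ((pd j (fun z => H z t) x) * (((H x t)⁻¹) * ((pd i (fun z => H z t) x) * (((H x t)⁻¹) * ((K x t))))))) + (-(((H x t)⁻¹) * ((pd i (fun y => pd j (fun z => H z t) y) x) * (((H x t)⁻¹) * ((K x t)))))) + (-(((H x t)⁻¹) * ((pd j (fun z => H z t) x) * (((H x t)⁻¹) * ((pd i (fun z => K z t) x)))))) + (-(((H x t)⁻¹) * ((pd i (fun z => H z t) x) * (((H x t)⁻¹) * ((pd j (fun z => K z t) x)))))) + (((H x t)⁻¹) * ((pd i (fun y => pd j (fun z => K z t) y) x))) + (((K x t)⁻¹)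 * ((pd i (fun z => K z t) x) * (((K x t)⁻¹) * ((pd j (fun z => K z t) x) * (((K x t)⁻¹) * ((H x t))))))) + (((K x t)⁻¹) * ((pd j (fun z => K z t) x) * (((K x t)⁻¹) * ((pd i (fun z => K z t) x) * (((K x t)⁻¹) * ((H x t))))))) + (-(((K x t)⁻¹) * ((pd i (fun y => pd j (fun z => K z t) y) x) * (((K x t)⁻¹) * ((H x t)))))) + (-(((K x t)⁻¹) * ((pd j (fun z => K z t) x) * (((K x t)⁻¹) * ((pd i (fun z => H z t) x)))))) + (-(((K x t)⁻¹) * ((pd i (fun z => K z t) x) * (((K x t)⁻¹) * ((pd j (fun z => H z t) x)))))) + (((K x t)⁻¹) * ((pd i (fun y => pd j (fun z => H z t) y) x))))).re := by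
    simp only [Complex.re_sum]
    refine Finset.sum_congr rfl fun ii _ => Finset.sum_congr rfl fun jj _ => ?_
    rw [hpdpd ii jj, Complex.re_ofReal_mul]
  rw [hsum1, ← Complex.sub_re]
  -- symmetry of the coefficient matrix
  have hγ : ∀ i j : Fin n, (((g x)⁻¹ i j : ℝ) : ℂ) = (((g x)⁻¹ j i : ℝ) : ℂ) := by
    intro i j
    congr 1
    exact isHermitian_real_symm (Matrix.PosDef.inv (hgpos x hx)).1 i j
  -- inverses
  have hFA : (H x t)⁻¹ * H x t = 1 := Matrix.nonsing_inv_mul _ (hHdet x hx t ht)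
  have hAF : H x t * (H x t)⁻¹ = 1 := Matrix.mul_nonsing_inv _ (hHdet x hx t ht)
  have hGB : (K x t)⁻¹ * K x t = 1 := Matrix.nonsing_inv_mul _ (hKdet x hx t ht)
  have hBG : K x t * (K x t)⁻¹ = 1 := Matrix.mul_nonsing_inv _ (hKdet x hx t ht)
  -- Hermitian facts
  have hAH : (H x t)ᴴ = H x t := (hHpos x hx t ht).1
  have hBH : (K x t)ᴴ = K x t := (hKpos x hx t ht).1
  have hFH : ((H x t)⁻¹)ᴴ = (H x t)⁻¹ := (Matrix.PosDef.inv (hHpos x hx t ht)).1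
  have hGH : ((K x t)⁻¹)ᴴ = (K x t)⁻¹ := (Matrix.PosDef.inv (hKpos x hx t ht)).1
  have dA : DifferentiableAt ℝ (fun z => H z t) x := (hHx x hx).differentiableAt (by simp)
  have dB : DifferentiableAt ℝ (fun z => K z t) x := (hKx x hx).differentiableAt (by simp)
  have hAiH : ∀ ii : Fin n, (pd ii (fun z => H z t) x)ᴴ = pd ii (fun z => H z t) x := by
    intro ii
    have h1 : (fun z => ctCLM (H z t)) =ᶠ[nhds x] (fun z => H z t) := by
      filter_upwards [hU.mem_nhds hx] with z hz
      exact (hHpos z hz t ht).1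
    calc (pd ii (fun z => H z t) x)ᴴ = ctCLM (pd ii (fun z => H z t) x) := rfl
      _ = pd ii (fun z => ctCLM (H z t)) x := (pd_clm ctCLM dA ii).symm
      _ = pd ii (fun z => H z t) x := pd_congr_nhds h1 ii
  have hBiH : ∀ ii : Fin n, (pd ii (fun z => K z t) x)ᴴ = pd ii (fun z => K z t) x := by
    intro ii
    have h1 : (fun z => ctCLM (K z t)) =ᶠ[nhds x] (fun z => K z t) := by
      filter_upwards [hU.mem_nhds hx] with z hz
      exact (hKpos z hz t ht).1
    calc (pd ii (fun z => K z t) x)ᴴ = ctCLM (pd ii (fun z => K z t) x) := rfl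
      _ = pd ii (fun z => ctCLM (K z t)) x := (pd_clm ctCLM dB ii).symm
      _ = pd ii (fun z => K z t) x := pd_congr_nhds h1 ii
  -- apply the grand identity
  have hgrand := grand (fun i j => (((g x)⁻¹ i j : ℝ) : ℂ)) hγ (H x t) (K x t)
    ((H x t)⁻¹) ((K x t)⁻¹) hFA hAF hGB hBG
    (fun i => pd i (fun z => H z t) x) (fun i => pd i (fun z => K z t) x)
    (fun i j => pd i (fun y => pd j (fun z => H z t) y) x)
    (fun i j => pd i (fun y => pd j (fun z => K z t) y) x)
    (fun i => θ i x) (fun j => (θ j x)ᴴ) lam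
    (deriv (fun s => H x s) t) (deriv (fun s => K x s) t)
    (hflowH x hx t ht) (hflowK x hx t ht)
  beta_reduce at hgrand
  rw [hgrand]
  -- positivity
  have hFpos : ((H x t)⁻¹).PosDef := Matrix.PosDef.inv (hHpos x hx t ht)
  have hGpos : ((K x t)⁻¹).PosDef := Matrix.PosDef.inv (hKpos x hx t ht)
  have hcpos : ((g x)⁻¹).PosDef := Matrix.PosDef.inv (hgpos x hx)
  have p1 : 0 ≤ (∑ i, ∑ j, (((g x)⁻¹ i j : ℝ) : ℂ) *
      Matrix.trace ((H x t)⁻¹ * (pd i (fun z => H z t) x * (H x t)⁻¹ * K x t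
          - pd i (fun z => K z t) x) * (K x t)⁻¹ *
        (K x t * (H x t)⁻¹ * pd j (fun z => H z t) x - pd j (fun z => K z t) x))).re := by
    have key := sum_trace_posdef_nonneg ((g x)⁻¹) hcpos hFpos hGpos
      (fun i => pd i (fun z => H z t) x * (H x t)⁻¹ * K x t - pd i (fun z => K z t) x)
    beta_reduce at key
    have hc : ∀ j : Fin n, (K x t * (H x t)⁻¹ * pd j (fun z => H z t) x
        - pd j (fun z => K z t) x)
        = (pd j (fun z => H z t) x * (H x t)⁻¹ * K x t - pd j (fun z => K z t) x)ᴴ := by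
      intro j
      simp only [Matrix.conjTranspose_sub, Matrix.conjTranspose_mul, hAiH, hBiH, hFH, hBH]
      noncomm_ring
    calc (0:ℝ) ≤ (∑ i, ∑ j, (((g x)⁻¹ i j : ℝ) : ℂ) *
        Matrix.trace ((H x t)⁻¹ * (pd i (fun z => H z t) x * (H x t)⁻¹ * K x t
            - pd i (fun z => K z t) x) * (K x t)⁻¹ *
          (pd j (fun z => H z t) x * (H x t)⁻¹ * K x t - pd j (fun z => K z t) x)ᴴ)).re := key
      _ = _ := by
          congr 1
          refine Finset.sum_congr rfl fun i _ => Finset.sum_congr rfl fun j _ => ?_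
          rw [hc j]
  have p2 : 0 ≤ (∑ i, ∑ j, (((g x)⁻¹ i j : ℝ) : ℂ) *
      Matrix.trace ((K x t)⁻¹ * (pd i (fun z => K z t) x * (K x t)⁻¹ * H x t
          - pd i (fun z => H z t) x) * (H x t)⁻¹ *
        (H x t * (K x t)⁻¹ * pd j (fun z => K z t) x - pd j (fun z => H z t) x))).re := by
    have key := sum_trace_posdef_nonneg ((g x)⁻¹) hcpos hGpos hFpos
      (fun i => pd i (fun z => K z t) x * (K x t)⁻¹ * H x t - pd i (fun z => H z t) x)
    beta_reduce at key
    have hc : ∀ j : Fin n, (H x t * (K x t)⁻¹ * pd j (fun z => K z t) x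
        - pd j (fun z => H z t) x)
        = (pd j (fun z => K z t) x * (K x t)⁻¹ * H x t - pd j (fun z => H z t) x)ᴴ := by
      intro j
      simp only [Matrix.conjTranspose_sub, Matrix.conjTranspose_mul, hAiH, hBiH, hGH, hAH]
      noncomm_ring
    calc (0:ℝ) ≤ (∑ i, ∑ j, (((g x)⁻¹ i j : ℝ) : ℂ) *
        Matrix.trace ((K x t)⁻¹ * (pd i (fun z => K z t) x * (K x t)⁻¹ * H x t
            - pd i (fun z => H z t) x) * (H x t)⁻¹ *
          (pd j (fun z => K z t) x * (K x t)⁻¹ * H x t - pd j (fun z => H z t) x)ᴴ)).re := key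
      _ = _ := by
          congr 1
          refine Finset.sum_congr rfl fun i _ => Finset.sum_congr rfl fun j _ => ?_
          rw [hc j]
  have p3 : 0 ≤ (∑ i, ∑ j, (((g x)⁻¹ i j : ℝ) : ℂ) *
      Matrix.trace ((H x t)⁻¹ * (K x t * θ i x - H x t * θ i x * (H x t)⁻¹ * K x t) * (K x t)⁻¹ *
        ((θ j x)ᴴ * K x t - K x t * (H x t)⁻¹ * (θ j x)ᴴ * H x t))).re := by
    have key := sum_trace_posdef_nonneg ((g x)⁻¹) hcpos hFpos hGpos
      (fun i => K x t * θ i x - H x t * θ i x * (H x t)⁻¹ * K x t)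
    beta_reduce at key
    have hc : ∀ j : Fin n, ((θ j x)ᴴ * K x t - K x t * (H x t)⁻¹ * (θ j x)ᴴ * H x t)
        = (K x t * θ j x - H x t * θ j x * (H x t)⁻¹ * K x t)ᴴ := by
      intro j
      simp only [Matrix.conjTranspose_sub, Matrix.conjTranspose_mul, hFH, hBH, hAH]
      noncomm_ring
    calc (0:ℝ) ≤ (∑ i, ∑ j, (((g x)⁻¹ i j : ℝ) : ℂ) *
        Matrix.trace ((H x t)⁻¹ * (K x t * θ i x - H x t * θ i x * (H x t)⁻¹ * K x t) * (K x t)⁻¹ *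
          (K x t * θ j x - H x t * θ j x * (H x t)⁻¹ * K x t)ᴴ)).re := key
      _ = _ := by
          congr 1
          refine Finset.sum_congr rfl fun i _ => Finset.sum_congr rfl fun j _ => ?_
          rw [hc j]
  have p4 : 0 ≤ (∑ i, ∑ j, (((g x)⁻¹ i j : ℝ) : ℂ) *
      Matrix.trace ((K x t)⁻¹ * (H x t * θ i x - K x t * θ i x * (K x t)⁻¹ * H x t) * (H x t)⁻¹ *
        ((θ j x)ᴴ * H x t - H x t * (K x t)⁻¹ * (θ j x)ᴴ * K x t))).re := by
    have key := sum_trace_posdef_nonneg ((g x)⁻¹) hcpos hGpos hFpos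
      (fun i => H x t * θ i x - K x t * θ i x * (K x t)⁻¹ * H x t)
    beta_reduce at key
    have hc : ∀ j : Fin n, ((θ j x)ᴴ * H x t - H x t * (K x t)⁻¹ * (θ j x)ᴴ * K x t)
        = (H x t * θ j x - K x t * θ j x * (K x t)⁻¹ * H x t)ᴴ := by
      intro j
      simp only [Matrix.conjTranspose_sub, Matrix.conjTranspose_mul, hGH, hBH, hAH]
      noncomm_ring
    calc (0:ℝ) ≤ (∑ i, ∑ j, (((g x)⁻¹ i j : ℝ) : ℂ) *
        Matrix.trace ((K x t)⁻¹ * (H x t * θ i x - K x t * θ i x * (K x t)⁻¹ * H x t) * (H x t)⁻¹ *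
          (H x t * θ j x - K x t * θ j x * (K x t)⁻¹ * H x t)ᴴ)).re := key
      _ = _ := by
          congr 1
          refine Finset.sum_congr rfl fun i _ => Finset.sum_congr rfl fun j _ => ?_
          rw [hc j]
  have hfour : ∀ z : ℂ, ((4 : ℂ) * z).re = 4 * z.re := by
    intro z
    have : ((4:ℝ) : ℂ) = (4 : ℂ) := by norm_num
    rw [← this, Complex.re_ofReal_mul]
  simp only [Complex.add_re, hfour]
  linarith [p1, p2, p3, p4]
end

section
/- Let h ∈ M_r(ℂ) be positive definite Hermitian and let θ ∈ M_r(ℂ) be arbitrary. Then tr( h·( θ(h⁻¹θ^†h − θ^†) − (h⁻¹θ^†h − θ^†)θ ) ) = ‖θh^{1/2} − hθh^{−1/2}‖_F²; in particular this trace is a nonnegative real number. (This is the identity tr(h[θ, θ^{*H} − θ^{*K}]) = |θh^{1/2} − hθh^{−1/2}|²_K, computed in a K-orthonormal frame, used in the proof of Proposition 3.5.) -/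
open Matrix
open scoped ComplexOrder

/-- The square root of a positive semidefinite matrix, as defined in the older Mathlib
(`Matrix.PosSemidef.sqrt`, since removed). -/
noncomputable def Matrix.PosSemidef.sqrt {n : Type*} [Fintype n] [DecidableEq n] {𝕜 : Type*}
    [RCLike 𝕜] {A : Matrix n n 𝕜} (hA : A.PosSemidef) : Matrix n n 𝕜 :=
  hA.1.eigenvectorUnitary.1 * diagonal ((↑) ∘ Real.sqrt ∘ hA.1.eigenvalues) *
    (star hA.1.eigenvectorUnitary : Matrix n n 𝕜)

/-!
With `c = θh - hθ` one has `h⁻¹θᴴh - θᴴ = -h⁻¹cᴴ`, and cyclicity of the trace turns the left side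
into `tr(c h⁻¹ cᴴ)`. For `s = h^{1/2}` one has `h^{-1/2} = s⁻¹` and `θs - hθs⁻¹ = c s⁻¹`, so this
is `tr(c s⁻¹ (c s⁻¹)ᴴ)`, the trace of a positive semidefinite matrix.
-/

namespace Matrix

section Sqrt

open scoped MatrixOrder

variable {n : Type*} [Fintype n] [DecidableEq n] {𝕜 : Type*} [RCLike 𝕜] {A : Matrix n n 𝕜}

theorem PosSemidef.sqrt_eq_cfcSqrt (hA : A.PosSemidef) : hA.sqrt = CFC.sqrt A := by
  rw [CFC.sqrt_eq_cfc, cfc_nnreal_eq_real _ A, hA.1.cfc_eq]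
  simp only [IsHermitian.cfc, Unitary.conjStarAlgAut_apply, PosSemidef.sqrt]
  unfold Real.sqrt
  rfl

theorem PosSemidef.sqrt_mul_sqrt (hA : A.PosSemidef) : hA.sqrt * hA.sqrt = A := by
  rw [hA.sqrt_eq_cfcSqrt]
  exact CFC.sqrt_mul_sqrt_self A hA.nonneg

theorem PosSemidef.isHermitian_sqrt (hA : A.PosSemidef) : hA.sqrt.IsHermitian := by
  rw [hA.sqrt_eq_cfcSqrt]
  exact (CFC.sqrt_nonneg A).posSemidef.isHermitian

theorem PosSemidef.sqrt_inv (hA : A.PosSemidef) (hA' : A⁻¹.PosSemidef) :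
    hA'.sqrt = hA.sqrt⁻¹ := by
  rw [hA'.sqrt_eq_cfcSqrt, hA.sqrt_eq_cfcSqrt, nonsing_inv_eq_ringInverse,
    nonsing_inv_eq_ringInverse, CFC.sqrt_ringInverse]

end Sqrt

variable {n : Type*} [Fintype n] [DecidableEq n] {R : Type*} [CommRing R] [StarRing R]

theorem trace_mul_bracket_eq_trace_commutator (h θ : Matrix n n R) (hH : h.IsHermitian)
    (hdet : IsUnit h.det) :
    trace (h * (θ * (h⁻¹ * θᴴ * h - θᴴ) - (h⁻¹ * θᴴ * h - θᴴ) * θ)) =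
      trace ((θ * h - h * θ) * h⁻¹ * (θ * h - h * θ)ᴴ) := by
  set A := h⁻¹ * θᴴ * h - θᴴ
  have hA : A = -(h⁻¹ * (θ * h - h * θ)ᴴ) := by
    rw [conjTranspose_sub, conjTranspose_mul, conjTranspose_mul, hH.eq, mul_sub,
      ← mul_assoc h⁻¹ h, nonsing_inv_mul _ hdet, one_mul, neg_sub, ← mul_assoc]
  calc trace (h * (θ * A - A * θ)) = trace (h * θ * A) - trace (θ * h * A) := by
        rw [mul_sub, trace_sub, ← mul_assoc, ← mul_assoc h A θ, trace_mul_comm (h * A) θ,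
          ← mul_assoc]
    _ = trace (-(θ * h - h * θ) * A) := by rw [neg_sub, sub_mul, trace_sub]
    _ = trace ((θ * h - h * θ) * h⁻¹ * (θ * h - h * θ)ᴴ) := by
        rw [hA, neg_mul_neg, mul_assoc]

theorem sub_mul_conjTranspose_self_eq_commutator (θ s h : Matrix n n R) (hs : s.IsHermitian)
    (hdet : IsUnit s.det) (hsh : s * s = h) :
    (θ * s - h * θ * s⁻¹) * (θ * s - h * θ * s⁻¹)ᴴ =
      (θ * h - h * θ) * h⁻¹ * (θ * h - h * θ)ᴴ := by
  subst hsh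
  have hY : θ * s - s * s * θ * s⁻¹ = (θ * (s * s) - s * s * θ) * s⁻¹ := by
    rw [sub_mul, mul_assoc θ, mul_assoc s s s⁻¹, mul_nonsing_inv _ hdet, mul_one]
  rw [hY, conjTranspose_mul, conjTranspose_nonsing_inv, hs.eq, mul_inv_rev]
  simp only [mul_assoc]

end Matrix

/-- **Identity `tr(h[θ, θ^{*H} − θ^{*K}]) = |θh^{1/2} − hθh^{−1/2}|²_K` (proof of Prop. 3.5).**
For a positive definite Hermitian `h` and arbitrary `θ`, writing `A = h⁻¹θᴴh − θᴴ`,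
one has `tr(h·(θA − Aθ)) = ‖θh^{1/2} − hθh^{−1/2}‖_F²`; in particular this trace is
a nonnegative real number. -/
theorem trace_h_bracket_eq_sq_norm
    {r : ℕ} (h θ : Matrix (Fin r) (Fin r) ℂ) (hh : h.PosDef) :
    Matrix.trace (h * (θ * (h⁻¹ * θᴴ * h - θᴴ) - (h⁻¹ * θᴴ * h - θᴴ) * θ)) =
      Matrix.trace
        ((θ * hh.posSemidef.sqrt - h * θ * (hh.inv).posSemidef.sqrt) *
          (θ * hh.posSemidef.sqrt - h * θ * (hh.inv).posSemidef.sqrt)ᴴ) ∧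
    (Matrix.trace (h * (θ * (h⁻¹ * θᴴ * h - θᴴ) - (h⁻¹ * θᴴ * h - θᴴ) * θ))).im = 0 ∧
    0 ≤ (Matrix.trace (h * (θ * (h⁻¹ * θᴴ * h - θᴴ) - (h⁻¹ * θᴴ * h - θᴴ) * θ))).re := by
  have hss := hh.posSemidef.sqrt_mul_sqrt
  have hdet : IsUnit h.det := (isUnit_iff_isUnit_det h).mp hh.isUnit
  have hdet_sqrt : IsUnit hh.posSemidef.sqrt.det :=
    isUnit_of_mul_isUnit_left (by rwa [← det_mul, hss])
  have key := trace_mul_bracket_eq_trace_commutator h θ hh.isHermitian hdet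
  rw [← sub_mul_conjTranspose_self_eq_commutator θ _ h hh.posSemidef.isHermitian_sqrt
      hdet_sqrt hss,
    ← hh.posSemidef.sqrt_inv hh.inv.posSemidef] at key
  obtain ⟨hre, him⟩ := Complex.nonneg_iff.mp (posSemidef_self_mul_conjTranspose
    (θ * hh.posSemidef.sqrt - h * θ * (hh.inv).posSemidef.sqrt)).trace_nonneg
  rw [key]
  exact ⟨rfl, him.symm, hre⟩
end

section
/- Let C > 0, let s ∈ M_r(ℂ) be Hermitian with operator norm ‖s‖ ≤ C, and let B ∈ M_r(ℂ) be arbitrary. Then the quantity Q := tr( exp(−s) · ( ∫₀¹ exp(τs)·B·exp((1−τ)s) dτ ) · B^† ) is a real number satisfying Q ≥ ((1 − e^{−2C})/(2C)) · tr(B·B^†) ≥ 0. (In the eigenbasis of s with eigenvalues λ_a, Q = Σ_{a,b} Ψ(λ_a,λ_b)|B_{ab}|²; this is the finite-dimensional coercivity estimate |D″s|²_{H₀} ≤ C̃·⟨Ψ(s)(D″s), D″s⟩_{H₀} used to derive the L²-bound on D″(log H₀⁻¹H) from the key identity.) -/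
open Matrix NormedSpace intervalIntegral

attribute [local instance] Matrix.normedAddCommGroup Matrix.normedSpace

/-!
Diagonalise `s = U diag(λ) U†` and put `B' = U† B U`. In this eigenbasis the integrand's trace is
`∑ e^{(1-τ)(λ_b-λ_a)} |B'_ab|²`, so `Q = ∑ Ψ(λ_a, λ_b) |B'_ab|²` with `Ψ(x, y) = ∫₀¹ e^{τ(y-x)} dτ`,
while `tr(B B†) = ∑ |B'_ab|²`. Since `Ψ(x, y)` increases with `y - x ≥ -2C`, each coefficient is at
least `Ψ(C, -C) = (1 - e^{-2C})/(2C)`.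
-/

/-- The integral form of `Ψ`; for `x ≠ y` it equals `(e^{y-x} - 1)/(y - x)`
by `integral_exp_mul_unitInterval`. -/
noncomputable def Psi (x y : ℝ) : ℝ := ∫ τ in (0:ℝ)..1, Real.exp (τ * (y - x))

lemma integral_exp_mul_unitInterval {c : ℝ} (hc : c ≠ 0) :
    ∫ τ in (0:ℝ)..1, Real.exp (τ * c) = (Real.exp c - 1) / c := by
  simp_rw [mul_comm _ c]
  rw [integral_comp_mul_left Real.exp hc, integral_exp, mul_zero, mul_one, Real.exp_zero,
    smul_eq_mul, inv_mul_eq_div]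

lemma Psi_le_Psi_of_sub_le {x y x' y' : ℝ} (h : y - x ≤ y' - x') : Psi x y ≤ Psi x' y' :=
  integral_mono_on zero_le_one (Continuous.intervalIntegrable (by fun_prop) _ _)
    (Continuous.intervalIntegrable (by fun_prop) _ _)
    fun _ hτ => Real.exp_le_exp.2 (mul_le_mul_of_nonneg_left h hτ.1)

lemma one_sub_exp_div_le_Psi {C x y : ℝ} (hC : 0 < C) (hx : |x| ≤ C) (hy : |y| ≤ C) :
    (1 - Real.exp (-(2 * C))) / (2 * C) ≤ Psi x y := calc
  _ = Psi C (-C) := by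
    rw [Psi, show -C - C = -(2 * C) by ring, integral_exp_mul_unitInterval (by linarith)]
    field_simp
    ring
  _ ≤ Psi x y := Psi_le_Psi_of_sub_le (by linarith [(abs_le.1 hx).2, (abs_le.1 hy).1])

lemma Psi_eq_integral_exp_mul_exp (x y : ℝ) :
    Psi x y = ∫ τ in (0:ℝ)..1, Real.exp ((τ - 1) * x) * Real.exp ((1 - τ) * y) := by
  have h := integral_comp_sub_left (fun τ => Real.exp (τ * (y - x))) (a := 0) (b := 1) 1
  rw [sub_self, sub_zero] at h
  rw [Psi, ← h]
  congr with τ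
  rw [← Real.exp_add]
  ring_nf

section

variable {n : Type*} [Fintype n] [DecidableEq n]

lemma trace_diagonal_mul_diagonal_mul_conjTranspose (d e : n → ℝ) (M : Matrix n n ℂ) :
    trace (diagonal (fun i => (d i : ℂ)) * M * diagonal (fun j => (e j : ℂ)) * Mᴴ) =
      ((∑ i, ∑ j, d i * e j * Complex.normSq (M i j) : ℝ) : ℂ) := by
  simp only [trace, diag, mul_apply (N := Mᴴ), conjTranspose_apply, mul_diagonal, diagonal_mul,
    Complex.ofReal_sum, Complex.ofReal_mul, Complex.normSq_eq_conj_mul_self, RCLike.star_def]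
  exact Finset.sum_congr rfl fun i _ => Finset.sum_congr rfl fun j _ => by ring

lemma continuous_exp_real_smul (s : Matrix n n ℂ) : Continuous fun t : ℝ => exp (t • s) := by
  -- `exp_continuous` needs a normed ring; the operator norm makes matrices one.
  open scoped Norms.Operator in
  exact exp_continuous.comp (continuous_id.smul continuous_const)

lemma trace_mul_intervalIntegral_mul (A M : Matrix n n ℂ) {f : ℝ → Matrix n n ℂ}
    (hf : Continuous f) (a b : ℝ) :
    trace (A * (∫ τ in a..b, f τ) * M) = ∫ τ in a..b, trace (A * f τ * M) :=
  ((LinearMap.toContinuousLinearMap (traceLinearMap n ℂ ℂ ∘ₗ LinearMap.mulRight ℂ M ∘ₗ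
    LinearMap.mulLeft ℂ A)).intervalIntegral_comp_comm (hf.intervalIntegrable a b)).symm

variable {s : Matrix n n ℂ} (hs : s.IsHermitian)

lemma Matrix.IsHermitian.exp_real_smul (t : ℝ) :
    NormedSpace.exp (t • s) = (hs.eigenvectorUnitary : Matrix n n ℂ) *
      diagonal (fun i => (Real.exp (t * hs.eigenvalues i) : ℂ)) *
        star (hs.eigenvectorUnitary : Matrix n n ℂ) := by
  set U := hs.eigenvectorUnitary
  have hts : t • s = (U : Matrix n n ℂ) * diagonal (fun i => ((t * hs.eigenvalues i : ℝ) : ℂ)) *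
      (U : Matrix n n ℂ)⁻¹ := by
    conv_lhs => rw [hs.spectral_theorem, Unitary.conjStarAlgAut_apply]
    rw [← smul_mul_assoc, ← mul_smul_comm, ← diagonal_smul,
      Matrix.inv_eq_left_inv (Unitary.coe_star_mul_self U)]
    congr 3 with i
    simp [Complex.real_smul]
  rw [hts, exp_conj (U : Matrix n n ℂ) _ ⟨Unitary.toUnits U, rfl⟩, exp_diagonal,
    Matrix.inv_eq_left_inv (Unitary.coe_star_mul_self U)]
  congr
  ext i
  simp [Complex.ofReal_exp, Complex.exp_eq_exp_ℂ]

lemma Matrix.IsHermitian.trace_exp_smul_mul_exp_smul_mul_conjTranspose (a b : ℝ)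
    (B : Matrix n n ℂ) :
    trace (NormedSpace.exp (a • s) * B * NormedSpace.exp (b • s) * Bᴴ) =
      ((∑ i, ∑ j, Real.exp (a * hs.eigenvalues i) * Real.exp (b * hs.eigenvalues j) *
        Complex.normSq ((star (hs.eigenvectorUnitary : Matrix n n ℂ) * B *
          (hs.eigenvectorUnitary : Matrix n n ℂ)) i j) : ℝ) : ℂ) := by
  rw [hs.exp_real_smul a, hs.exp_real_smul b, ← trace_diagonal_mul_diagonal_mul_conjTranspose]
  set U : Matrix n n ℂ := (hs.eigenvectorUnitary : Matrix n n ℂ)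
  set Da := diagonal fun i => (Real.exp (a * hs.eigenvalues i) : ℂ)
  set Db := diagonal fun j => (Real.exp (b * hs.eigenvalues j) : ℂ)
  have hUU : U * Uᴴ = 1 := Unitary.mul_star_self_of_mem hs.eigenvectorUnitary.2
  calc _ = trace (U * (Da * (star U * B * U) * Db * (star U * B * U)ᴴ) * star U) := by
        simp only [conjTranspose_mul, star_eq_conjTranspose, conjTranspose_conjTranspose,
          mul_assoc, hUU, mul_one]
    _ = _ := by
      rw [trace_mul_cycle, ← mul_assoc, Unitary.star_mul_self_of_mem hs.eigenvectorUnitary.2,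
        one_mul]

lemma Matrix.IsHermitian.trace_exp_neg_mul_integral_mul_conjTranspose (B : Matrix n n ℂ) :
    trace (NormedSpace.exp (-s) * (∫ τ in (0:ℝ)..1,
        NormedSpace.exp (τ • s) * B * NormedSpace.exp ((1 - τ) • s)) * Bᴴ) =
      ((∑ i, ∑ j, Psi (hs.eigenvalues i) (hs.eigenvalues j) *
        Complex.normSq ((star (hs.eigenvectorUnitary : Matrix n n ℂ) * B *
          (hs.eigenvectorUnitary : Matrix n n ℂ)) i j) : ℝ) : ℂ) := by
  have hexp (τ : ℝ) :
      NormedSpace.exp (-s) * NormedSpace.exp (τ • s) = NormedSpace.exp ((τ - 1) • s) := by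
    rw [← Matrix.exp_add_of_commute _ _ ((Commute.refl s).smul_right τ).neg_left, sub_smul,
      one_smul, neg_add_eq_sub]
  have hcont : Continuous fun τ : ℝ =>
      NormedSpace.exp (τ • s) * B * NormedSpace.exp ((1 - τ) • s) :=
    ((continuous_exp_real_smul s).mul continuous_const).mul
      ((continuous_exp_real_smul s).comp (continuous_const.sub continuous_id))
  refine (trace_mul_intervalIntegral_mul _ _ hcont 0 1).trans ?_
  simp_rw [← mul_assoc, hexp, hs.trace_exp_smul_mul_exp_smul_mul_conjTranspose]
  rw [integral_ofReal, integral_finsetSum fun i _ => Continuous.intervalIntegrable (by fun_prop) _ _]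
  congr 1
  refine Finset.sum_congr rfl fun i _ => ?_
  rw [integral_finsetSum fun j _ => Continuous.intervalIntegrable (by fun_prop) _ _]
  refine Finset.sum_congr rfl fun j _ => ?_
  rw [integral_mul_const, Psi_eq_integral_exp_mul_exp]

end

/-- **Finite-dimensional coercivity estimate `|D″s|² ≤ C̃·⟨Ψ(s)(D″s), D″s⟩` (Section 4/5).**
Let `s` be Hermitian with operator norm (equivalently, all eigenvalues in absolute
value) at most `C`, and `B` arbitrary. Then
`Q = tr(exp(−s)·(∫₀¹ exp(τs)·B·exp((1−τ)s) dτ)·B†)` is a real number with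
`Q ≥ ((1 − e^{−2C})/(2C))·tr(B·B†) ≥ 0`. -/
theorem coercivity_of_Psi
    {r : ℕ} (C : ℝ) (hC : 0 < C)
    (s B : Matrix (Fin r) (Fin r) ℂ) (hs : s.IsHermitian)
    (hbound : ∀ i, |hs.eigenvalues i| ≤ C) :
    (Matrix.trace
        (exp (-s) * (∫ τ in (0:ℝ)..1, exp (τ • s) * B * exp ((1 - τ) • s)) * Bᴴ)).im
      = 0 ∧
    ((1 - Real.exp (-(2 * C))) / (2 * C)) * (Matrix.trace (B * Bᴴ)).re ≤
      (Matrix.trace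
        (exp (-s) * (∫ τ in (0:ℝ)..1, exp (τ • s) * B * exp ((1 - τ) • s)) * Bᴴ)).re ∧
    0 ≤ ((1 - Real.exp (-(2 * C))) / (2 * C)) * (Matrix.trace (B * Bᴴ)).re := by
  have hQ := hs.trace_exp_neg_mul_integral_mul_conjTranspose B
  have hBB : trace (B * Bᴴ) = ((∑ i, ∑ j, Complex.normSq ((star (hs.eigenvectorUnitary :
      Matrix (Fin r) (Fin r) ℂ) * B * (hs.eigenvectorUnitary : Matrix (Fin r) (Fin r) ℂ)) i j)
        : ℝ) : ℂ) := by
    simpa using hs.trace_exp_smul_mul_exp_smul_mul_conjTranspose 0 0 B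
  have hκ : 0 ≤ (1 - Real.exp (-(2 * C))) / (2 * C) :=
    div_nonneg (sub_nonneg.2 (Real.exp_le_one_iff.2 (by linarith))) (by positivity)
  refine ⟨by rw [hQ, Complex.ofReal_im], ?_, ?_⟩
  · rw [hQ, hBB, Complex.ofReal_re, Complex.ofReal_re, Finset.mul_sum]
    refine Finset.sum_le_sum fun i _ => ?_
    rw [Finset.mul_sum]
    exact Finset.sum_le_sum fun j _ => mul_le_mul_of_nonneg_right
      (one_sub_exp_div_le_Psi hC (hbound i) (hbound j)) (Complex.normSq_nonneg _)
  · rw [hBB, Complex.ofReal_re]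
    exact mul_nonneg hκ (Finset.sum_nonneg fun i _ => Finset.sum_nonneg fun j _ =>
      Complex.normSq_nonneg _)
end
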